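/- arXiv:2006.16436 — 6 statements merged into one kernel-verified Lean document; each statement's English description precedes it below -/
import Mathlib

section
/- Let (𝒜,∂) be a triangular based DGA over ℤ/2 with ordered generators x₁,…,xₙ, and suppose that for some indices j < i one has ∂xᵢ = xⱼ + w with w in the subalgebra generated by x₁,…,x_{j−1}. Let I ⊆ 𝒜 be the two-sided ideal generated by xᵢ and ∂xᵢ. Then ∂(I) ⊆ I, so the quotient 𝒜/I carries an induced ℤ/2-linear differential ∂̄ satisfying the Leibniz rule and ∂̄∘∂̄ = 0; the unital algebra homomorphism from the free ℤ/2-algebra on the generators {x_l : l ∉ {i,j}} to 𝒜/I sending each generator to its residue class is an algebra isomorphism; and 𝒜/I is triangular with respect to the induced ordered generating set {x̄_l : l ∉ {i,j}}. -/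
private lemma char2_add_self {M : Type*} [AddCommMonoid M] [Module (ZMod 2) M] (a : M) :
    a + a = 0 := by
  have h2 : (2 : ZMod 2) = 0 := by decide
  rw [← two_smul (ZMod 2) a, h2, zero_smul]

/-- Let `(𝒜,∂)` be a triangular based DGA over `ℤ/2` with ordered
generators `x₀,…,x_{n-1}` (here `𝒜 = FreeAlgebra (ZMod 2) (Fin n)`), and suppose
`∂xᵢ = xⱼ + w` with `j < i` and `w` in the subalgebra generated by the generators below `j`.
Let `I` be the two-sided ideal generated by `xᵢ` and `∂xᵢ`, and let `p : 𝒜 → Q` be any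
realization of the quotient `𝒜/I` (a surjective algebra morphism with kernel `I`).  Then
`∂(I) ⊆ I`; the quotient carries an induced `ℤ/2`-linear differential satisfying the Leibniz
rule and squaring to zero, which is moreover triangular with respect to the residue classes of
the generators `x_l`, `l ∉ {i,j}`; and the algebra morphism from the free algebra on
`{l // l ≠ i ∧ l ≠ j}` to `Q` sending each generator to the residue class `p(x_l)` is an
algebra isomorphism. -/
theorem quotient_of_triangular_DGA
    (n : ℕ)
    (d : FreeAlgebra (ZMod 2) (Fin n) →ₗ[ZMod 2] FreeAlgebra (ZMod 2) (Fin n))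
    (hd_leib : ∀ a b, d (a * b) = d a * b + a * d b)
    (hd_sq : ∀ a, d (d a) = 0)
    (htri : ∀ k : Fin n, d (FreeAlgebra.ι (ZMod 2) k) ∈
      Algebra.adjoin (ZMod 2) (FreeAlgebra.ι (ZMod 2) '' {l : Fin n | l < k}))
    (i j : Fin n) (hji : j < i)
    (w : FreeAlgebra (ZMod 2) (Fin n))
    (hw : w ∈ Algebra.adjoin (ZMod 2) (FreeAlgebra.ι (ZMod 2) '' {l : Fin n | l < j}))
    (hdi : d (FreeAlgebra.ι (ZMod 2) i) = FreeAlgebra.ι (ZMod 2) j + w)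
    (I : TwoSidedIdeal (FreeAlgebra (ZMod 2) (Fin n)))
    (hI : I = TwoSidedIdeal.span
      {FreeAlgebra.ι (ZMod 2) i, d (FreeAlgebra.ι (ZMod 2) i)})
    (Q : Type) [Ring Q] [Algebra (ZMod 2) Q]
    (p : FreeAlgebra (ZMod 2) (Fin n) →ₐ[ZMod 2] Q)
    (hp_surj : Function.Surjective p)
    (hp_ker : ∀ a, p a = 0 ↔ a ∈ I) :
    (∀ a ∈ I, d a ∈ I) ∧
    (∃ dbar : Q →ₗ[ZMod 2] Q,
      (∀ a, dbar (p a) = p (d a)) ∧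
      (∀ x y : Q, dbar (x * y) = dbar x * y + x * dbar y) ∧
      (∀ x : Q, dbar (dbar x) = 0) ∧
      (∀ k : {l : Fin n // l ≠ i ∧ l ≠ j},
        dbar (p (FreeAlgebra.ι (ZMod 2) (k : Fin n))) ∈
          Algebra.adjoin (ZMod 2)
            ((fun l : Fin n => p (FreeAlgebra.ι (ZMod 2) l)) ''
              {l : Fin n | l ≠ i ∧ l ≠ j ∧ l < (k : Fin n)}))) ∧
    Function.Bijective
      (FreeAlgebra.lift (ZMod 2)
        (fun k : {l : Fin n // l ≠ i ∧ l ≠ j} =>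
          p (FreeAlgebra.ι (ZMod 2) (k : Fin n)))) := by
  classical
  have hxi_mem : FreeAlgebra.ι (ZMod 2) i ∈ I := by
    rw [hI]; exact TwoSidedIdeal.subset_span (Set.mem_insert _ _)
  have hdxi_mem : d (FreeAlgebra.ι (ZMod 2) i) ∈ I := by
    rw [hI]; exact TwoSidedIdeal.subset_span (Set.mem_insert_of_mem _ rfl)
  -- Part 1: d preserves I
  have hdI : ∀ a ∈ I, d a ∈ I := by
    intro a ha
    set J : TwoSidedIdeal (FreeAlgebra (ZMod 2) (Fin n)) :=
      TwoSidedIdeal.mk' {a | a ∈ I ∧ d a ∈ I}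
        ⟨I.zero_mem, by rw [map_zero]; exact I.zero_mem⟩
        (fun hx hy => ⟨I.add_mem hx.1 hy.1, by
          rw [map_add]; exact I.add_mem hx.2 hy.2⟩)
        (fun hx => ⟨I.neg_mem hx.1, by rw [map_neg]; exact I.neg_mem hx.2⟩)
        (fun {x y} hy => ⟨I.mul_mem_left x y hy.1, by
          rw [hd_leib]
          exact I.add_mem (I.mul_mem_left (d x) y hy.1) (I.mul_mem_left x (d y) hy.2)⟩)
        (fun {x y} hx => ⟨I.mul_mem_right x y hx.1, by
          rw [hd_leib]
          exact I.add_mem (I.mul_mem_right (d x) y hx.2) (I.mul_mem_right x (d y) hx.1)⟩)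
      with hJ
    have hsub : ({FreeAlgebra.ι (ZMod 2) i, d (FreeAlgebra.ι (ZMod 2) i)} :
        Set (FreeAlgebra (ZMod 2) (Fin n))) ⊆ J := by
      rintro z (rfl | rfl)
      · exact (TwoSidedIdeal.mem_mk' _ _ _ _ _ _ _).mpr ⟨hxi_mem, hdxi_mem⟩
      · exact (TwoSidedIdeal.mem_mk' _ _ _ _ _ _ _).mpr
          ⟨hdxi_mem, by rw [hd_sq]; exact I.zero_mem⟩
    have haJ : a ∈ J := by
      rw [hI] at ha
      exact TwoSidedIdeal.mem_span_iff.mp ha J hsub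
    exact ((TwoSidedIdeal.mem_mk' _ _ _ _ _ _ _).mp haJ).2
  refine ⟨hdI, ?_, ?_⟩
  -- Part 2: the induced differential
  · have hker : LinearMap.ker p.toLinearMap ≤
        LinearMap.ker (p.toLinearMap ∘ₗ d) := by
      intro a ha
      simp only [LinearMap.mem_ker, LinearMap.comp_apply, AlgHom.toLinearMap_apply] at *
      exact (hp_ker _).mpr (hdI a ((hp_ker a).mp ha))
    have hp_surj' : Function.Surjective p.toLinearMap := hp_surj
    set e := p.toLinearMap.quotKerEquivOfSurjective hp_surj' with he
    set dbar : Q →ₗ[ZMod 2] Q :=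
      ((LinearMap.ker p.toLinearMap).liftQ (p.toLinearMap ∘ₗ d) hker) ∘ₗ
        (e.symm : Q →ₗ[ZMod 2] _) with hdbar
    have he_mk : ∀ a, e (Submodule.Quotient.mk a) = p a := by
      intro a
      rw [he]
      simp [LinearMap.quotKerEquivOfSurjective]
    have hcom : ∀ a, dbar (p a) = p (d a) := by
      intro a
      have hsymm : e.symm (p a) = Submodule.Quotient.mk a := by
        rw [LinearEquiv.symm_apply_eq, he_mk]
      rw [hdbar]
      simp only [LinearMap.comp_apply, LinearEquiv.coe_coe, hsymm]
      rw [Submodule.liftQ_apply]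
      rfl
    have hpxj : p (FreeAlgebra.ι (ZMod 2) j) = p w := by
      have h0 : p (FreeAlgebra.ι (ZMod 2) j) + p w = 0 := by
        rw [← map_add, ← hdi]
        exact (hp_ker _).mpr hdxi_mem
      have hw2 : p w + p w = 0 := char2_add_self _
      calc p (FreeAlgebra.ι (ZMod 2) j)
          = p (FreeAlgebra.ι (ZMod 2) j) + (p w + p w) := by rw [hw2, add_zero]
        _ = (p (FreeAlgebra.ι (ZMod 2) j) + p w) + p w := by rw [add_assoc]
        _ = p w := by rw [h0, zero_add]
    refine ⟨dbar, hcom, ?_, ?_, ?_⟩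
    · intro x y
      obtain ⟨a, rfl⟩ := hp_surj x
      obtain ⟨b, rfl⟩ := hp_surj y
      rw [← map_mul, hcom, hd_leib, map_add, map_mul, map_mul, hcom, hcom]
    · intro x
      obtain ⟨a, rfl⟩ := hp_surj x
      rw [hcom, hcom, hd_sq, map_zero]
    · intro k
      rw [hcom]
      have h1 : p (d (FreeAlgebra.ι (ZMod 2) (k : Fin n))) ∈
          Algebra.adjoin (ZMod 2)
            ((fun l : Fin n => p (FreeAlgebra.ι (ZMod 2) l)) '' {l : Fin n | l < (k : Fin n)}) := by
        have h0 : p (d (FreeAlgebra.ι (ZMod 2) (k : Fin n))) ∈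
            (Algebra.adjoin (ZMod 2)
              (FreeAlgebra.ι (ZMod 2) '' {l : Fin n | l < (k : Fin n)})).map p :=
          Subalgebra.mem_map.mpr ⟨_, htri (k : Fin n), rfl⟩
        rwa [AlgHom.map_adjoin, Set.image_image] at h0
      have hle : Algebra.adjoin (ZMod 2)
            ((fun l : Fin n => p (FreeAlgebra.ι (ZMod 2) l)) '' {l : Fin n | l < (k : Fin n)}) ≤
          Algebra.adjoin (ZMod 2)
            ((fun l : Fin n => p (FreeAlgebra.ι (ZMod 2) l)) ''
              {l : Fin n | l ≠ i ∧ l ≠ j ∧ l < (k : Fin n)}) := by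
        apply Algebra.adjoin_le
        rintro _ ⟨l, hl, rfl⟩
        show p (FreeAlgebra.ι (ZMod 2) l) ∈ _
        by_cases hli : l = i
        · subst hli
          have : p (FreeAlgebra.ι (ZMod 2) l) = 0 := (hp_ker _).mpr hxi_mem
          rw [this]; exact Subalgebra.zero_mem _
        by_cases hlj : l = j
        · subst hlj
          rw [hpxj]
          have hsub : Algebra.adjoin (ZMod 2)
              ((fun l' : Fin n => p (FreeAlgebra.ι (ZMod 2) l')) '' {l' : Fin n | l' < l}) ≤
              Algebra.adjoin (ZMod 2)
                ((fun l' : Fin n => p (FreeAlgebra.ι (ZMod 2) l')) ''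
                  {l' : Fin n | l' ≠ i ∧ l' ≠ l ∧ l' < (k : Fin n)}) := by
            apply Algebra.adjoin_mono
            apply Set.image_mono
            intro l' hl'
            exact ⟨ne_of_lt (lt_trans hl' hji), ne_of_lt hl', lt_trans hl' hl⟩
          apply hsub
          have h0 : p w ∈ (Algebra.adjoin (ZMod 2)
              (FreeAlgebra.ι (ZMod 2) '' {l' : Fin n | l' < l})).map p :=
            Subalgebra.mem_map.mpr ⟨_, hw, rfl⟩
          rwa [AlgHom.map_adjoin, Set.image_image] at h0
        · exact Algebra.subset_adjoin ⟨l, ⟨hli, hlj, hl⟩, rfl⟩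
      exact hle h1
  -- Part 3: the algebra isomorphism
  · set φ := FreeAlgebra.lift (ZMod 2)
      (fun k : {l : Fin n // l ≠ i ∧ l ≠ j} =>
        p (FreeAlgebra.ι (ZMod 2) (k : Fin n))) with hφ
    set σ : FreeAlgebra (ZMod 2) {l : Fin n // l ≠ i ∧ l ≠ j} →ₐ[ZMod 2]
        FreeAlgebra (ZMod 2) (Fin n) :=
      FreeAlgebra.lift (ZMod 2) (fun k => FreeAlgebra.ι (ZMod 2) (k : Fin n)) with hσ
    set r₀ : FreeAlgebra (ZMod 2) (Fin n) →ₐ[ZMod 2]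
        FreeAlgebra (ZMod 2) {l : Fin n // l ≠ i ∧ l ≠ j} :=
      FreeAlgebra.lift (ZMod 2) (fun l => if h : l ≠ i ∧ l ≠ j then
        FreeAlgebra.ι (ZMod 2) (⟨l, h⟩ : {l : Fin n // l ≠ i ∧ l ≠ j}) else 0) with hr₀
    set ψ : FreeAlgebra (ZMod 2) (Fin n) →ₐ[ZMod 2]
        FreeAlgebra (ZMod 2) {l : Fin n // l ≠ i ∧ l ≠ j} :=
      FreeAlgebra.lift (ZMod 2) (fun l => if h : l ≠ i ∧ l ≠ j then
        FreeAlgebra.ι (ZMod 2) (⟨l, h⟩ : {l : Fin n // l ≠ i ∧ l ≠ j})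
        else if l = j then r₀ w else 0) with hψ
    have hij : i ≠ j := (ne_of_lt hji).symm
    have hφι : ∀ k : {l : Fin n // l ≠ i ∧ l ≠ j},
        φ (FreeAlgebra.ι (ZMod 2) k) = p (FreeAlgebra.ι (ZMod 2) (k : Fin n)) :=
      fun k => FreeAlgebra.lift_ι_apply _ _
    have hσι : ∀ k : {l : Fin n // l ≠ i ∧ l ≠ j},
        σ (FreeAlgebra.ι (ZMod 2) k) = FreeAlgebra.ι (ZMod 2) (k : Fin n) :=
      fun k => FreeAlgebra.lift_ι_apply _ _
    have hr₀ι : ∀ l : Fin n, r₀ (FreeAlgebra.ι (ZMod 2) l) =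
        if h : l ≠ i ∧ l ≠ j then
          FreeAlgebra.ι (ZMod 2) (⟨l, h⟩ : {l : Fin n // l ≠ i ∧ l ≠ j}) else 0 :=
      fun l => FreeAlgebra.lift_ι_apply _ _
    have hψι : ∀ l : Fin n, ψ (FreeAlgebra.ι (ZMod 2) l) =
        if h : l ≠ i ∧ l ≠ j then
          FreeAlgebra.ι (ZMod 2) (⟨l, h⟩ : {l : Fin n // l ≠ i ∧ l ≠ j})
        else if l = j then r₀ w else 0 :=
      fun l => FreeAlgebra.lift_ι_apply _ _
    -- ψ and r₀ agree on the subalgebra generated by generators below j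
    have hagree : Algebra.adjoin (ZMod 2)
        (FreeAlgebra.ι (ZMod 2) '' {l : Fin n | l < j}) ≤ AlgHom.equalizer ψ r₀ := by
      apply Algebra.adjoin_le
      rintro _ ⟨l, hl, rfl⟩
      have h1 : l ≠ i ∧ l ≠ j := ⟨ne_of_lt (lt_trans hl hji), ne_of_lt hl⟩
      show ψ (FreeAlgebra.ι (ZMod 2) l) = r₀ (FreeAlgebra.ι (ZMod 2) l)
      rw [hψι, hr₀ι, dif_pos h1, dif_pos h1]
    have hψw : ψ w = r₀ w := hagree hw
    have hψxj : ψ (FreeAlgebra.ι (ZMod 2) j) = ψ w := by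
      rw [hψι, dif_neg (by simp), if_pos rfl, hψw]
    have hψxi : ψ (FreeAlgebra.ι (ZMod 2) i) = 0 := by
      rw [hψι, dif_neg (by simp), if_neg hij]
    have hψdxi : ψ (d (FreeAlgebra.ι (ZMod 2) i)) = 0 := by
      rw [hdi, map_add, hψxj]
      exact char2_add_self _
    -- ψ kills I
    have hψI : ∀ a ∈ I, ψ a = 0 := by
      intro a ha
      set J' : TwoSidedIdeal (FreeAlgebra (ZMod 2) (Fin n)) :=
        TwoSidedIdeal.mk' {a : FreeAlgebra (ZMod 2) (Fin n) | ψ a = 0}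
          (by simp)
          (fun hx hy => by simp only [Set.mem_setOf_eq] at *; rw [map_add, hx, hy, add_zero])
          (fun hx => by simp only [Set.mem_setOf_eq] at *; rw [map_neg, hx, neg_zero])
          (fun {x y} hy => by
            simp only [Set.mem_setOf_eq] at *; rw [map_mul, hy, mul_zero])
          (fun {x y} hx => by
            simp only [Set.mem_setOf_eq] at *; rw [map_mul, hx, zero_mul]) with hJ'
      have hsub : ({FreeAlgebra.ι (ZMod 2) i, d (FreeAlgebra.ι (ZMod 2) i)} :
          Set (FreeAlgebra (ZMod 2) (Fin n))) ⊆ J' := by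
        rintro z (rfl | rfl)
        · exact (TwoSidedIdeal.mem_mk' _ _ _ _ _ _ _).mpr hψxi
        · exact (TwoSidedIdeal.mem_mk' _ _ _ _ _ _ _).mpr hψdxi
      rw [hI] at ha
      have haJ' : a ∈ J' := TwoSidedIdeal.mem_span_iff.mp ha J' hsub
      rw [hJ', TwoSidedIdeal.mem_mk'] at haJ'
      exact haJ'
    -- ψ ∘ σ = id
    have hψσ : ∀ b, ψ (σ b) = b := by
      have h2 : ψ.comp σ = AlgHom.id (ZMod 2) _ := by
        apply FreeAlgebra.hom_ext
        funext k
        show ψ (σ (FreeAlgebra.ι (ZMod 2) k)) = FreeAlgebra.ι (ZMod 2) k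
        rw [hσι, hψι, dif_pos k.2]
      intro b
      calc ψ (σ b) = (ψ.comp σ) b := rfl
        _ = b := by rw [h2]; rfl
    -- p ∘ σ = φ
    have hφσ : ∀ b, p (σ b) = φ b := by
      have h2 : p.comp σ = φ := by
        apply FreeAlgebra.hom_ext
        funext k
        show p (σ (FreeAlgebra.ι (ZMod 2) k)) = φ (FreeAlgebra.ι (ZMod 2) k)
        rw [hσι, hφι]
      intro b
      calc p (σ b) = (p.comp σ) b := rfl
        _ = φ b := by rw [h2]
    -- φ ∘ ψ = p
    have hφψ : ∀ a, φ (ψ a) = p a := by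
      have h2 : φ.comp ψ = p := by
        apply FreeAlgebra.hom_ext
        funext l
        show φ (ψ (FreeAlgebra.ι (ZMod 2) l)) = p (FreeAlgebra.ι (ZMod 2) l)
        by_cases h1 : l ≠ i ∧ l ≠ j
        · rw [hψι, dif_pos h1, hφι]
        · push_neg at h1
          by_cases hli : l = i
          · subst hli
            rw [hψι, dif_neg (by simp), if_neg hij, map_zero]
            exact ((hp_ker _).mpr hxi_mem).symm
          · have hlj : l = j := h1 hli
            subst hlj
            rw [hψι, dif_neg (by simp), if_pos rfl]
            have hpxj : p (FreeAlgebra.ι (ZMod 2) l) = p w := by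
              have h0 : p (FreeAlgebra.ι (ZMod 2) l) + p w = 0 := by
                rw [← map_add, ← hdi]
                exact (hp_ker _).mpr hdxi_mem
              have hw2 : p w + p w = 0 := char2_add_self _
              calc p (FreeAlgebra.ι (ZMod 2) l)
                  = p (FreeAlgebra.ι (ZMod 2) l) + (p w + p w) := by rw [hw2, add_zero]
                _ = (p (FreeAlgebra.ι (ZMod 2) l) + p w) + p w := by rw [add_assoc]
                _ = p w := by rw [h0, zero_add]
            rw [hpxj]
            -- φ (r₀ w) = p w : compare on the adjoin containing w
            have hagree2 : Algebra.adjoin (ZMod 2)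
                (FreeAlgebra.ι (ZMod 2) '' {l' : Fin n | l' < l}) ≤
                AlgHom.equalizer (φ.comp r₀) p := by
              apply Algebra.adjoin_le
              rintro _ ⟨l', hl', rfl⟩
              have h2 : l' ≠ i ∧ l' ≠ l := ⟨ne_of_lt (lt_trans hl' hji), ne_of_lt hl'⟩
              show (φ.comp r₀) (FreeAlgebra.ι (ZMod 2) l') = p (FreeAlgebra.ι (ZMod 2) l')
              show φ (r₀ (FreeAlgebra.ι (ZMod 2) l')) = p (FreeAlgebra.ι (ZMod 2) l')
              rw [hr₀ι, dif_pos h2, hφι]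
            exact hagree2 hw
      intro a
      calc φ (ψ a) = (φ.comp ψ) a := rfl
        _ = p a := by rw [h2]
    constructor
    · -- injective
      intro b b' hbb'
      have h0 : φ (b - b') = 0 := by
        rw [map_sub, hbb', sub_self]
      have h1 : p (σ (b - b')) = 0 := by rw [hφσ (b - b')]; exact h0
      have h2 : σ (b - b') ∈ I := (hp_ker _).mp h1
      have h3 : ψ (σ (b - b')) = 0 := hψI _ h2
      rw [hψσ] at h3
      exact sub_eq_zero.mp h3
    · -- surjective
      intro q
      obtain ⟨a, rfl⟩ := hp_surj q
      exact ⟨ψ a, hφψ a⟩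
end

section
/- Let (𝒜,∂) be a triangular based DGA over ℤ/2 with ordered generators x₁,…,xₙ, suppose ∂xᵢ = xⱼ + w with j < i and w in the subalgebra generated by x₁,…,x_{j−1}, let I be the two-sided ideal generated by xᵢ and ∂xᵢ, and let p: 𝒜 → 𝒜/I be the quotient map. Let S be the based DGA with two generators y, z and ∂y = z, ∂z = 0, and let (𝒜/I)*S be the free DGA on the generators of 𝒜/I together with y and z, whose differential extends those of 𝒜/I and S. Then there exists a DGA isomorphism φ: (𝒜/I)*S → 𝒜 with φ(y) = xᵢ and φ(z) = ∂xᵢ, such that π∘φ⁻¹ = p, where π: (𝒜/I)*S → 𝒜/I is the DGA morphism restricting to the identity on 𝒜/I and sending y and z to 0. Moreover, if Y ⊆ {x₁,…,xₙ} is a subset with xᵢ, xⱼ ∉ Y such that ∂ maps the subalgebra generated by Y into itself, then φ can be chosen so that in addition φ(x̄_k) = x_k for every x_k ∈ Y. -/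
namespace QSI
open FreeAlgebra

abbrev K := ZMod 2
abbrev FA (X : Type) := FreeAlgebra K X

lemma ch2 {M : Type*} [AddCommMonoid M] [Module K M] (x : M) : x + x = 0 := by
  have : ((2 : K)) • x = x + x := two_smul K x
  rw [show (2 : K) = 0 by decide, zero_smul] at this
  exact this.symm

lemma ch2cancel {M : Type*} [AddCommMonoid M] [Module K M] {x y : M} (h : x + y = 0) : x = y := by
  have := congrArg (· + y) h
  simpa [add_assoc, ch2 y] using this

lemma Qch2 {Q : Type*} [Ring Q] [Algebra K Q] (q : Q) : q + q = 0 := by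
  have h1 : ((1:Q) + 1) = algebraMap K Q (1 + 1) := by simp
  rw [show ((1:K)+1) = 0 by decide, map_zero] at h1
  calc q + q = ((1:Q)+1) * q := by rw [add_mul, one_mul]
    _ = 0 := by rw [h1, zero_mul]

lemma Qch2cancel {Q : Type*} [Ring Q] [Algebra K Q] {x y : Q} (h : x + y = 0) : x = y := by
  have := congrArg (· + y) h
  simpa [add_assoc, Qch2 y] using this

section leib
variable {A B : Type*} [Ring A] [Ring B] [Algebra K A] [Algebra K B]

lemma leib_one (f : A →ₐ[K] B) (L : A →ₗ[K] B)
    (hL : ∀ a b, L (a*b) = L a * f b + f a * L b) : L 1 = 0 := by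
  have h := hL 1 1
  simp only [mul_one, map_one, one_mul] at h
  have h0 : L 1 + 0 = L 1 + L 1 := by simpa using h
  exact (add_left_cancel h0).symm

lemma leib_algebraMap (f : A →ₐ[K] B) (L : A →ₗ[K] B)
    (hL : ∀ a b, L (a*b) = L a * f b + f a * L b) (r : K) : L (algebraMap K A r) = 0 := by
  have : algebraMap K A r = r • (1:A) := by rw [Algebra.smul_def, mul_one]
  rw [this, map_smul, leib_one f L hL, smul_zero]

/-- two Leibniz maps over the same algebra map agree on an adjoin if they agree on generators -/
lemma leib_eqOn (f : A →ₐ[K] B) (L₁ L₂ : A →ₗ[K] B)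
    (h₁ : ∀ a b, L₁ (a*b) = L₁ a * f b + f a * L₁ b)
    (h₂ : ∀ a b, L₂ (a*b) = L₂ a * f b + f a * L₂ b)
    (s : Set A) (hs : ∀ x ∈ s, L₁ x = L₂ x) :
    ∀ a ∈ Algebra.adjoin K s, L₁ a = L₂ a := by
  intro a ha
  induction ha using Algebra.adjoin_induction with
  | mem x hx => exact hs x hx
  | algebraMap r => rw [leib_algebraMap f L₁ h₁, leib_algebraMap f L₂ h₂]
  | add x y hx hy ihx ihy => rw [map_add, map_add, ihx, ihy]
  | mul x y hx hy ihx ihy => rw [h₁, h₂, ihx, ihy]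

lemma alg_eqOn (f g : A →ₐ[K] B) (s : Set A) (hs : ∀ x ∈ s, f x = g x) :
    ∀ a ∈ Algebra.adjoin K s, f a = g a := by
  intro a ha
  induction ha using Algebra.adjoin_induction with
  | mem x hx => exact hs x hx
  | algebraMap r => rw [AlgHom.commutes, AlgHom.commutes]
  | add x y hx hy ihx ihy => rw [map_add, map_add, ihx, ihy]
  | mul x y hx hy ihx ihy => rw [map_mul, map_mul, ihx, ihy]

lemma alg_mapsTo (f : A →ₐ[K] B) (s : Set A) (t : Set B)
    (hs : ∀ x ∈ s, f x ∈ Algebra.adjoin K t) :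
    ∀ a ∈ Algebra.adjoin K s, f a ∈ Algebra.adjoin K t := by
  intro a ha
  induction ha using Algebra.adjoin_induction with
  | mem x hx => exact hs x hx
  | algebraMap r => rw [AlgHom.commutes]; exact Subalgebra.algebraMap_mem _ r
  | add x y hx hy ihx ihy => rw [map_add]; exact add_mem ihx ihy
  | mul x y hx hy ihx ihy => rw [map_mul]; exact mul_mem ihx ihy

lemma leib_mapsTo (L : A →ₗ[K] A) (hL : ∀ a b, L (a*b) = L a * b + a * L b)
    (s : Set A) (hs : ∀ x ∈ s, L x ∈ Algebra.adjoin K s) :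
    ∀ a ∈ Algebra.adjoin K s, L a ∈ Algebra.adjoin K s := by
  intro a ha
  induction ha using Algebra.adjoin_induction with
  | mem x hx => exact hs x hx
  | algebraMap r => rw [leib_algebraMap (AlgHom.id K A) L hL]; exact zero_mem _
  | add x y hx hy ihx ihy => rw [map_add]; exact add_mem ihx ihy
  | mul x y hx hy ihx ihy =>
      rw [hL]
      exact add_mem (mul_mem ihx hy) (mul_mem hx ihy)

lemma mem_adjoin_range {X : Type} (a : FA X) :
    a ∈ Algebra.adjoin K (Set.range (ι K (X := X))) := by
  induction a using FreeAlgebra.induction with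
  | grade0 r => exact Subalgebra.algebraMap_mem _ r
  | grade1 x => exact Algebra.subset_adjoin ⟨x, rfl⟩
  | mul a b ha hb => exact mul_mem ha hb
  | add a b ha hb => exact add_mem ha hb

end leib
section words

variable {X : Type}

noncomputable def wd : FreeMonoid X →* FA X := FreeMonoid.lift (ι K)

lemma wd_one : wd (1 : FreeMonoid X) = 1 := map_one _
lemma wd_of (x : X) : wd (FreeMonoid.of x) = ι K x := FreeMonoid.lift_eval_of _ x
lemma wd_of_mul (x : X) (u : FreeMonoid X) : wd (FreeMonoid.of x * u) = ι K x * wd u := by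
  rw [map_mul, wd_of]

noncomputable abbrev emafm (X : Type) : FA X ≃ₐ[K] MonoidAlgebra K (FreeMonoid X) :=
  FreeAlgebra.equivMonoidAlgebraFreeMonoid

lemma emafm_ι (x : X) : emafm X (ι K x) = MonoidAlgebra.single (FreeMonoid.of x) 1 := by
  simp [emafm, FreeAlgebra.equivMonoidAlgebraFreeMonoid, MonoidAlgebra.of_apply]

lemma emafm_wd (u : FreeMonoid X) : emafm X (wd u) = MonoidAlgebra.single u 1 := by
  refine FreeMonoid.recOn u ?_ ?_
  · rw [wd_one, map_one]; rfl
  · intro x u ih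
    rw [wd_of_mul, map_mul, emafm_ι, ih]
    exact (MonoidAlgebra.single_mul_single _ _ _ _).trans (by rw [one_mul])

lemma wd_ext {M : Type*} [AddCommMonoid M] [Module K M] (L₁ L₂ : FA X →ₗ[K] M)
    (h : ∀ u, L₁ (wd u) = L₂ (wd u)) : L₁ = L₂ := by
  apply LinearMap.ext; intro a
  have ha : a = (emafm X).symm (emafm X a) := ((emafm X).symm_apply_apply a).symm
  rw [ha]
  generalize (emafm X) a = m
  induction m using MonoidAlgebra.induction_linear with
  | zero => rw [map_zero, map_zero, map_zero]
  | add f g hf hg => rw [map_add, map_add, map_add, hf, hg]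
  | single u b =>
      have hs : (MonoidAlgebra.single u b : MonoidAlgebra K (FreeMonoid X))
          = b • MonoidAlgebra.single u 1 := by
        rw [MonoidAlgebra.smul_single, smul_eq_mul, mul_one]
      have h1 : (emafm X).symm (MonoidAlgebra.single u 1) = wd u := by
        rw [← emafm_wd]; exact AlgEquiv.symm_apply_apply _ _
      rw [hs, map_smul, map_smul, map_smul, h1, h u]

end words

section hmapSec
variable {V : Type}

noncomputable def hword : List (V ⊕ Fin 2) → FA (V ⊕ Fin 2)
  | [] => 0
  | (Sum.inl v) :: u => ι K (Sum.inl v) * hword u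
  | (Sum.inr t) :: u =>
      if t = 1 then ι K (Sum.inr (0 : Fin 2)) * wd (FreeMonoid.ofList u) else 0

noncomputable def hmap : FA (V ⊕ Fin 2) →ₗ[K] FA (V ⊕ Fin 2) :=
  (Finsupp.linearCombination K (fun u : FreeMonoid (V ⊕ Fin 2) => hword u.toList)).comp
    ((MonoidAlgebra.coeffLinearEquiv K).toLinearMap.comp (emafm (V ⊕ Fin 2)).toLinearMap)

lemma hmap_wd (u : FreeMonoid (V ⊕ Fin 2)) : hmap (wd u) = hword u.toList := by
  unfold hmap
  rw [LinearMap.comp_apply]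
  show (Finsupp.linearCombination K fun u => hword (FreeMonoid.toList u))
    ((MonoidAlgebra.coeffLinearEquiv K) ((emafm (V ⊕ Fin 2)) (wd u))) = hword (FreeMonoid.toList u)
  rw [emafm_wd, MonoidAlgebra.coeffLinearEquiv_apply, MonoidAlgebra.coeff_single, Finsupp.linearCombination_single, one_smul]

lemma hmap_one : hmap (1 : FA (V ⊕ Fin 2)) = 0 := by
  have := hmap_wd (V := V) 1
  rw [wd_one] at this
  rw [this]; rfl

lemma hmap_inl_mul (v : V) (m : FA (V ⊕ Fin 2)) :
    hmap (ι K (Sum.inl v) * m) = ι K (Sum.inl v) * hmap m := by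
  have : hmap.comp (LinearMap.mulLeft K (ι K (Sum.inl v)))
      = (LinearMap.mulLeft K (ι K (Sum.inl v))).comp hmap := by
    apply wd_ext
    intro u
    simp only [LinearMap.comp_apply, LinearMap.mulLeft_apply]
    rw [← wd_of_mul, hmap_wd, hmap_wd, FreeMonoid.toList_of_mul]
    rfl
  exact congrArg (fun L => L m) this

lemma hmap_y_mul (m : FA (V ⊕ Fin 2)) : hmap (ι K (Sum.inr (0:Fin 2)) * m) = 0 := by
  have : (hmap (V := V)).comp (LinearMap.mulLeft K (ι K (Sum.inr (0:Fin 2)))) = 0 := by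
    apply wd_ext
    intro u
    simp only [LinearMap.comp_apply, LinearMap.mulLeft_apply, LinearMap.zero_apply]
    rw [← wd_of_mul, hmap_wd, FreeMonoid.toList_of_mul]
    show (if (0:Fin 2) = 1 then _ else (0 : FA (V ⊕ Fin 2))) = 0
    rw [if_neg (by decide)]
  exact congrArg (fun L => L m) this

lemma hmap_z_mul (m : FA (V ⊕ Fin 2)) :
    hmap (ι K (Sum.inr (1:Fin 2)) * m) = ι K (Sum.inr (0:Fin 2)) * m := by
  have : (hmap (V := V)).comp (LinearMap.mulLeft K (ι K (Sum.inr (1:Fin 2))))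
      = LinearMap.mulLeft K (ι K (Sum.inr (0:Fin 2))) := by
    apply wd_ext
    intro u
    simp only [LinearMap.comp_apply, LinearMap.mulLeft_apply]
    rw [← wd_of_mul, hmap_wd, FreeMonoid.toList_of_mul]
    show (if (1:Fin 2) = 1 then ι K (Sum.inr (0:Fin 2)) * wd (FreeMonoid.ofList u.toList)
      else 0) = _
    rw [if_pos rfl, FreeMonoid.ofList_toList]
  exact congrArg (fun L => L m) this

lemma hmap_mul_adj (c : FA (V ⊕ Fin 2))
    (hc : c ∈ Algebra.adjoin K (ι K '' Set.range (Sum.inl : V → V ⊕ Fin 2)))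
    (m : FA (V ⊕ Fin 2)) : hmap (c * m) = c * hmap m := by
  induction hc using Algebra.adjoin_induction generalizing m with
  | mem x hx =>
      obtain ⟨x', ⟨v, rfl⟩, rfl⟩ := hx
      exact hmap_inl_mul v m
  | algebraMap r =>
      rw [Algebra.algebraMap_eq_smul_one, smul_mul_assoc, one_mul, map_smul, smul_mul_assoc,
        one_mul]
  | add x y hx hy ihx ihy => rw [add_mul, map_add, ihx, ihy, add_mul]
  | mul x y hx hy ihx ihy => rw [mul_assoc, ihx, ihy, mul_assoc]

end hmapSec

section homotopy
variable {V : Type}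

lemma dE_one (dE : FA (V ⊕ Fin 2) →ₗ[K] FA (V ⊕ Fin 2))
    (hleib : ∀ a b, dE (a*b) = dE a * b + a * dE b) : dE 1 = 0 :=
  leib_one (AlgHom.id K _) dE (fun a b => by simpa using hleib a b)

lemma homotopy_id (dE : FA (V ⊕ Fin 2) →ₗ[K] FA (V ⊕ Fin 2))
    (hleib : ∀ a b, dE (a*b) = dE a * b + a * dE b)
    (hgen : ∀ v : V, dE (ι K (Sum.inl v)) ∈
      Algebra.adjoin K (ι K '' Set.range (Sum.inl : V → V ⊕ Fin 2)))
    (hy : dE (ι K (Sum.inr (0:Fin 2))) = ι K (Sum.inr (1:Fin 2)))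
    (hz : dE (ι K (Sum.inr (1:Fin 2))) = 0)
    (P : FA (V ⊕ Fin 2) →ₐ[K] FA (V ⊕ Fin 2))
    (hPl : ∀ v, P (ι K (Sum.inl v)) = ι K (Sum.inl v))
    (hPr : ∀ t : Fin 2, P (ι K (Sum.inr t)) = 0) :
    ∀ m, dE (hmap m) + hmap (dE m) + m + P m = 0 := by
  have key : dE ∘ₗ hmap + hmap ∘ₗ dE + LinearMap.id + P.toLinearMap
      = (0 : FA (V ⊕ Fin 2) →ₗ[K] FA (V ⊕ Fin 2)) := by
    apply wd_ext
    intro u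
    simp only [LinearMap.add_apply, LinearMap.comp_apply, LinearMap.id_apply,
      AlgHom.toLinearMap_apply, LinearMap.zero_apply]
    induction u using FreeMonoid.recOn with
    | one =>
        rw [wd_one]
        have h1 : hmap (1 : FA (V ⊕ Fin 2)) = 0 := hmap_one
        rw [h1, map_zero, dE_one dE hleib, map_zero, zero_add, zero_add, map_one, ch2]
    | of_mul x u ih =>
        rcases x with v | t
        · rw [wd_of_mul, hmap_inl_mul, hleib (ι K (Sum.inl v)) (hmap (wd u)),
            hleib (ι K (Sum.inl v)) (wd u), map_add,
            hmap_mul_adj _ (hgen v) (wd u), hmap_inl_mul, map_mul, hPl]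
          have expand :
              dE (ι K (Sum.inl v)) * hmap (wd u) + ι K (Sum.inl v) * dE (hmap (wd u)) +
                (dE (ι K (Sum.inl v)) * hmap (wd u) + ι K (Sum.inl v) * hmap (dE (wd u))) +
                ι K (Sum.inl v) * wd u + ι K (Sum.inl v) * P (wd u)
              = (dE (ι K (Sum.inl v)) * hmap (wd u) + dE (ι K (Sum.inl v)) * hmap (wd u)) +
                ι K (Sum.inl v) *
                  (dE (hmap (wd u)) + hmap (dE (wd u)) + wd u + P (wd u)) := by
            noncomm_ring
          rw [expand, ih, mul_zero, ch2, add_zero]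
        · rcases eq_or_ne t 1 with rfl | hne
          · -- z case
            have e1 : hmap (ι K (Sum.inr (1:Fin 2)) * wd u)
                = ι K (Sum.inr (0:Fin 2)) * wd u := hmap_z_mul _
            have e2 : dE (ι K (Sum.inr (0:Fin 2)) * wd u)
                = ι K (Sum.inr (1:Fin 2)) * wd u + ι K (Sum.inr (0:Fin 2)) * dE (wd u) := by
              rw [hleib, hy]
            have e3 : dE (ι K (Sum.inr (1:Fin 2)) * wd u)
                = ι K (Sum.inr (1:Fin 2)) * dE (wd u) := by
              rw [hleib, hz, zero_mul, zero_add]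
            have e4 : hmap (ι K (Sum.inr (1:Fin 2)) * dE (wd u))
                = ι K (Sum.inr (0:Fin 2)) * dE (wd u) := hmap_z_mul _
            have e5 : P (ι K (Sum.inr (1:Fin 2)) * wd u) = 0 := by
              rw [map_mul, hPr, zero_mul]
            rw [wd_of_mul, e1, e2, e3, e4, e5]
            have expand :
                ι K (Sum.inr (1:Fin 2)) * wd u + ι K (Sum.inr (0:Fin 2)) * dE (wd u) +
                  ι K (Sum.inr (0:Fin 2)) * dE (wd u) +
                  ι K (Sum.inr (1:Fin 2)) * wd u + 0
                = (ι K (Sum.inr (1:Fin 2)) * wd u + ι K (Sum.inr (1:Fin 2)) * wd u) +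
                  (ι K (Sum.inr (0:Fin 2)) * dE (wd u) +
                    ι K (Sum.inr (0:Fin 2)) * dE (wd u)) := by
              abel
            rw [expand, ch2, ch2, add_zero]
          · -- y case
            have hv : t.val = 0 := by
              have h2 : t.val < 2 := t.isLt
              have h1 : t.val ≠ 1 := fun h => hne (Fin.ext h)
              omega
            have ht : t = 0 := Fin.ext hv
            subst ht
            have e1 : hmap (ι K (Sum.inr (0:Fin 2)) * wd u) = 0 := hmap_y_mul _
            have e2 : dE (ι K (Sum.inr (0:Fin 2)) * wd u)
                = ι K (Sum.inr (1:Fin 2)) * wd u + ι K (Sum.inr (0:Fin 2)) * dE (wd u) := by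
              rw [hleib, hy]
            have e3 : hmap (ι K (Sum.inr (1:Fin 2)) * wd u
                  + ι K (Sum.inr (0:Fin 2)) * dE (wd u))
                = ι K (Sum.inr (0:Fin 2)) * wd u := by
              rw [map_add, hmap_z_mul, hmap_y_mul, add_zero]
            have e5 : P (ι K (Sum.inr (0:Fin 2)) * wd u) = 0 := by
              rw [map_mul, hPr, zero_mul]
            rw [wd_of_mul, e1, map_zero, e2, e3, e5, zero_add, add_zero, ch2]
  intro m
  have := congrArg (fun L => L m) key
  simpa using this

lemma hword_pi {Q : Type} [Ring Q] [Algebra K Q] (π : FA (V ⊕ Fin 2) →ₐ[K] Q)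
    (hπ : ∀ t : Fin 2, π (ι K (Sum.inr t)) = 0) :
    ∀ l : List (V ⊕ Fin 2), π (hword l) = 0 := by
  intro l
  induction l with
  | nil => simp [hword]
  | cons x u ih =>
      rcases x with v | t
      · show π (ι K (Sum.inl v) * hword u) = 0
        rw [map_mul, ih, mul_zero]
      · show π (if t = 1 then ι K (Sum.inr (0:Fin 2)) * wd (FreeMonoid.ofList u) else 0) = 0
        split
        · rw [map_mul, hπ 0, zero_mul]
        · exact map_zero _

lemma hmap_pi {Q : Type} [Ring Q] [Algebra K Q] (π : FA (V ⊕ Fin 2) →ₐ[K] Q)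
    (hπ : ∀ t : Fin 2, π (ι K (Sum.inr t)) = 0) (m : FA (V ⊕ Fin 2)) : π (hmap m) = 0 := by
  have key : π.toLinearMap ∘ₗ hmap = (0 : FA (V ⊕ Fin 2) →ₗ[K] Q) := by
    apply wd_ext
    intro u
    simp only [LinearMap.comp_apply, AlgHom.toLinearMap_apply, LinearMap.zero_apply, hmap_wd]
    exact hword_pi π hπ u.toList
  have := congrArg (fun L => L m) key
  simpa using this

end homotopy

section wspan
variable {X : Type}

lemma wd_mem_adjoin (T : Set X) :
    ∀ u : FreeMonoid X, (∀ x ∈ u.toList, x ∈ T) → wd u ∈ Algebra.adjoin K (ι K '' T) := by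
  intro u
  induction u using FreeMonoid.recOn with
  | one => intro _; rw [wd_one]; exact one_mem _
  | of_mul x u ih =>
      intro h
      rw [wd_of_mul]
      have hx : x ∈ T := h x (by rw [FreeMonoid.toList_of_mul]; exact List.mem_cons_self)
      have hu : ∀ y ∈ u.toList, y ∈ T := fun y hy =>
        h y (by rw [FreeMonoid.toList_of_mul]; exact List.mem_cons_of_mem _ hy)
      exact mul_mem (Algebra.subset_adjoin ⟨x, hx, rfl⟩) (ih hu)

def wspan (T : Set X) : Submodule K (FA X) :=
  Submodule.span K {m | ∃ u : FreeMonoid X, (∀ x ∈ u.toList, x ∈ T) ∧ wd u = m}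

lemma wspan_mul (T : Set X) : ∀ a ∈ wspan T, ∀ b ∈ wspan T, a * b ∈ wspan T := by
  intro a ha
  induction ha using Submodule.span_induction with
  | mem x hx =>
      obtain ⟨u, hu, rfl⟩ := hx
      intro b hb
      induction hb using Submodule.span_induction with
      | mem y hy =>
          obtain ⟨v, hv, rfl⟩ := hy
          rw [← map_mul]
          apply Submodule.subset_span
          refine ⟨u * v, ?_, rfl⟩
          intro x hx
          rw [FreeMonoid.toList_mul] at hx
          rcases List.mem_append.mp hx with h | h
          · exact hu x h
          · exact hv x h
      | zero => rw [mul_zero]; exact zero_mem _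
      | add y z _ _ ihy ihz => rw [mul_add]; exact add_mem ihy ihz
      | smul r y _ ihy => rw [mul_smul_comm]; exact Submodule.smul_mem _ r ihy
  | zero => intro b _; rw [zero_mul]; exact zero_mem _
  | add x y _ _ ihx ihy => intro b hb; rw [add_mul]; exact add_mem (ihx b hb) (ihy b hb)
  | smul r x _ ihx => intro b hb; rw [smul_mul_assoc]; exact Submodule.smul_mem _ r (ihx b hb)

lemma adjoin_le_wspan (T : Set X) :
    ∀ m ∈ Algebra.adjoin K (ι K '' T), m ∈ wspan T := by
  intro m hm
  induction hm using Algebra.adjoin_induction with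
  | mem x hx =>
      obtain ⟨x', hx', rfl⟩ := hx
      apply Submodule.subset_span
      exact ⟨FreeMonoid.of x', by simp [FreeMonoid.toList_of, hx'], wd_of x'⟩
  | algebraMap r =>
      have : algebraMap K (FA X) r = r • (1 : FA X) := by rw [Algebra.smul_def, mul_one]
      rw [this]
      refine Submodule.smul_mem _ r (Submodule.subset_span ⟨1, ?_, wd_one⟩)
      intro x hx
      simp [FreeMonoid.toList_one] at hx
  | add x y _ _ ihx ihy => exact add_mem ihx ihy
  | mul x y _ _ ihx ihy => exact wspan_mul T x ihx y ihy

end wspan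

section hadj
variable {V : Type}

lemma hword_mem_adjoin (T : Set (V ⊕ Fin 2)) (hT : Sum.inr (0:Fin 2) ∈ T) :
    ∀ l : List (V ⊕ Fin 2), (∀ x ∈ l, x ∈ T) → hword l ∈ Algebra.adjoin K (ι K '' T) := by
  intro l
  induction l with
  | nil => intro _; exact zero_mem _
  | cons x u ih =>
      intro h
      rcases x with v | t
      · show ι K (Sum.inl v) * hword u ∈ _
        exact mul_mem (Algebra.subset_adjoin ⟨_, h _ (List.mem_cons_self), rfl⟩)
          (ih fun y hy => h y (List.mem_cons_of_mem _ hy))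
      · show (if t = 1 then ι K (Sum.inr (0:Fin 2)) * wd (FreeMonoid.ofList u) else 0) ∈ _
        split
        · refine mul_mem (Algebra.subset_adjoin ⟨_, hT, rfl⟩) (wd_mem_adjoin T _ ?_)
          intro y hy
          rw [FreeMonoid.toList_ofList] at hy
          exact h y (List.mem_cons_of_mem _ hy)
        · exact zero_mem _

lemma hmap_adjoin (T : Set (V ⊕ Fin 2)) (hT : Sum.inr (0:Fin 2) ∈ T) :
    ∀ m ∈ Algebra.adjoin K (ι K '' T), hmap m ∈ Algebra.adjoin K (ι K '' T) := by
  intro m hm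
  have hm' : m ∈ wspan T := adjoin_le_wspan T m hm
  clear hm
  induction hm' using Submodule.span_induction with
  | mem x hx =>
      obtain ⟨u, hu, rfl⟩ := hx
      rw [hmap_wd]
      exact hword_mem_adjoin T hT u.toList hu
  | zero => rw [map_zero]; exact zero_mem _
  | add x y _ _ ihx ihy => rw [map_add]; exact add_mem ihx ihy
  | smul r x _ ihx => rw [map_smul]; exact Subalgebra.smul_mem _ ihx r

end hadj

section triangular
variable {X X' : Type}

noncomputable def Gs (e : X ≃ X') (lv : X' → ℕ) (t : X → FA X') : ℕ → X' → FA X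
  | 0 => fun _ => 0
  | m+1 => fun v =>
      if lv v = m then
        ι K (e.symm v) +
          (FreeAlgebra.lift K (fun v' => if lv v' < m then Gs e lv t m v' else 0))
            (t (e.symm v))
      else Gs e lv t m v

lemma Gs_stable (e : X ≃ X') (lv : X' → ℕ) (t : X → FA X') (m : ℕ) :
    ∀ m', m ≤ m' → ∀ v, lv v < m → Gs e lv t m' v = Gs e lv t m v := by
  intro m'
  induction m' with
  | zero => intro h v hv; have : m = 0 := Nat.le_zero.mp h; subst this; rfl
  | succ m'' ih =>
      intro h v hv
      rcases eq_or_lt_of_le h with rfl | hlt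
      · rfl
      · have hm : m ≤ m'' := Nat.lt_succ_iff.mp hlt
        show (if lv v = m'' then _ else Gs e lv t m'' v) = _
        rw [if_neg (by omega : ¬ lv v = m'')]
        exact ih hm v hv

noncomputable def Ginv (e : X ≃ X') (lv : X' → ℕ) (t : X → FA X') : FA X' →ₐ[K] FA X :=
  FreeAlgebra.lift K (fun v => Gs e lv t (lv v + 1) v)

lemma Ginv_ι (e : X ≃ X') (lv : X' → ℕ) (t : X → FA X') (v : X') :
    Ginv e lv t (ι K v) = Gs e lv t (lv v + 1) v := by
  unfold Ginv; rw [FreeAlgebra.lift_ι_apply]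

lemma triangular_bijective (e : X ≃ X') (lv : X' → ℕ)
    (f : FA X →ₐ[K] FA X') (t : X → FA X')
    (hf : ∀ x, f (ι K x) = ι K (e x) + t x)
    (ht : ∀ x, t x ∈ Algebra.adjoin K (ι K '' {v : X' | lv v < lv (e x)})) :
    Function.Bijective f := by
  set g := Ginv e lv t with hgdef
  have trunc_agree : ∀ m, ∀ a ∈ Algebra.adjoin K (ι K '' {v : X' | lv v < m}),
      (FreeAlgebra.lift K (fun v' => if lv v' < m then Gs e lv t m v' else 0)) a = g a := by
    intro m
    apply alg_eqOn
    rintro x ⟨v, hv, rfl⟩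
    have hv' : lv v < m := hv
    rw [FreeAlgebra.lift_ι_apply, hgdef, Ginv_ι, if_pos hv']
    exact Gs_stable e lv t (lv v + 1) m (by omega) v (by omega)
  have hGv : ∀ x : X, g (ι K (e x)) = ι K x + g (t x) := by
    intro x
    rw [hgdef, Ginv_ι]
    show Gs e lv t (lv (e x) + 1) (e x) = _
    simp only [Gs]
    rw [if_true, e.symm_apply_apply]
    congr 1
    exact trunc_agree (lv (e x)) (t x) (ht x)
  have main : ∀ N, ∀ x : X, lv (e x) < N →
      g (f (ι K x)) = ι K x ∧ f (g (ι K (e x))) = ι K (e x) := by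
    intro N
    induction N with
    | zero => intro x hx; exact absurd hx (Nat.not_lt_zero _)
    | succ N ihN =>
        intro x hx
        have hxN : lv (e x) ≤ N := Nat.lt_succ_iff.mp hx
        constructor
        · rw [hf, map_add, hGv, add_assoc, ch2, add_zero]
        · have hfg_low : ∀ a ∈ Algebra.adjoin K (ι K '' {v : X' | lv v < lv (e x)}),
              f (g a) = a := by
            have := alg_eqOn (f.comp g) (AlgHom.id K (FA X'))
              (ι K '' {v : X' | lv v < lv (e x)}) ?_
            · intro a ha
              have h2 := this a ha
              simpa using h2
            · rintro _ ⟨v, hv, rfl⟩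
              have hv' : lv v < lv (e x) := hv
              have h2 := (ihN (e.symm v) (by rw [e.apply_symm_apply]; omega)).2
              rw [e.apply_symm_apply] at h2
              simpa using h2
          rw [hGv, map_add, hf, hfg_low (t x) (ht x), add_assoc, ch2, add_zero]
  have hgf : ∀ a, g (f a) = a := by
    intro a
    induction a using FreeAlgebra.induction with
    | grade0 r => rw [AlgHom.commutes, AlgHom.commutes]
    | grade1 x => exact (main (lv (e x) + 1) x (by omega)).1
    | mul a b ha hb => rw [map_mul, map_mul, ha, hb]
    | add a b ha hb => rw [map_add, map_add, ha, hb]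
  have hfg : ∀ b, f (g b) = b := by
    intro b
    induction b using FreeAlgebra.induction with
    | grade0 r => rw [AlgHom.commutes, AlgHom.commutes]
    | grade1 v =>
        have h2 := (main (lv v + 1) (e.symm v) (by rw [e.apply_symm_apply]; omega)).2
        rw [e.apply_symm_apply] at h2
        exact h2
    | mul a b ha hb => rw [map_mul, map_mul, ha, hb]
    | add a b ha hb => rw [map_add, map_add, ha, hb]
  exact ⟨fun a b hab => by rw [← hgf a, hab, hgf b], fun b => ⟨g b, hfg b⟩⟩

end triangular

section rec
variable (n : ℕ) (i j : Fin n) (w : FA (Fin n)) (d : FA (Fin n) →ₗ[K] FA (Fin n))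
variable (d' : FA {l : Fin n // l ≠ i ∧ l ≠ j} →ₗ[K] FA {l : Fin n // l ≠ i ∧ l ≠ j})
variable (κ : FA {l : Fin n // l ≠ i ∧ l ≠ j} →ₐ[K]
  FA ({l : Fin n // l ≠ i ∧ l ≠ j} ⊕ Fin 2))

noncomputable def newval (Fprev : Fin n → FA ({l : Fin n // l ≠ i ∧ l ≠ j} ⊕ Fin 2))
    (k : Fin n) : FA ({l : Fin n // l ≠ i ∧ l ≠ j} ⊕ Fin 2) :=
  if hki : k = i then ι K (Sum.inr (0 : Fin 2))
  else if hkj : k = j then ι K (Sum.inr (1 : Fin 2)) + FreeAlgebra.lift K Fprev w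
  else ι K (Sum.inl ⟨k, hki, hkj⟩) +
    hmap (FreeAlgebra.lift K Fprev (d (ι K k)) + κ (d' (ι K ⟨k, hki, hkj⟩)))

noncomputable def FsD : ℕ → Fin n → FA ({l : Fin n // l ≠ i ∧ l ≠ j} ⊕ Fin 2)
  | 0 => fun _ => 0
  | m+1 => fun k =>
      if k.val = m then
        newval n i j w d d' κ (fun l => if l.val < m then FsD m l else 0) k
      else FsD m k

lemma FsD_stable (m : ℕ) : ∀ m', m ≤ m' → ∀ k : Fin n, k.val < m →
    FsD n i j w d d' κ m' k = FsD n i j w d d' κ m k := by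
  intro m'
  induction m' with
  | zero => intro h k hk; have : m = 0 := Nat.le_zero.mp h; subst this; rfl
  | succ m'' ih =>
      intro h k hk
      rcases eq_or_lt_of_le h with rfl | hlt
      · rfl
      · have hm : m ≤ m'' := Nat.lt_succ_iff.mp hlt
        show (if k.val = m'' then _ else FsD n i j w d d' κ m'' k) = _
        rw [if_neg (by omega : ¬ k.val = m'')]
        exact ih hm k hk

end rec

section inter
variable {X : Type}

open Classical in
noncomputable def retr (S : Set X) : FA X →ₐ[K] FA X :=
  FreeAlgebra.lift K (fun x => if x ∈ S then ι K x else 0)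

open Classical in
lemma retr_ι (S : Set X) (x : X) : retr S (ι K x) = if x ∈ S then ι K x else 0 := by
  unfold retr; rw [FreeAlgebra.lift_ι_apply]

lemma retr_fix (S : Set X) : ∀ a ∈ Algebra.adjoin K (ι K '' S), retr S a = a := by
  apply alg_eqOn (retr S) (AlgHom.id K (FA X))
  rintro x ⟨x', hx', rfl⟩
  rw [retr_ι, if_pos hx']
  rfl

lemma retr_mem (S : Set X) (a : FA X) : retr S a ∈ Algebra.adjoin K (ι K '' S) := by
  induction a using FreeAlgebra.induction with
  | grade0 r => rw [AlgHom.commutes]; exact Subalgebra.algebraMap_mem _ r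
  | grade1 x =>
      rw [retr_ι]
      split
      · exact Algebra.subset_adjoin ⟨x, ‹_›, rfl⟩
      · exact zero_mem _
  | mul a b ha hb => rw [map_mul]; exact mul_mem ha hb
  | add a b ha hb => rw [map_add]; exact add_mem ha hb

lemma adjoin_inter (S T : Set X) (a : FA X)
    (hS : a ∈ Algebra.adjoin K (ι K '' S)) (hT : a ∈ Algebra.adjoin K (ι K '' T)) :
    a ∈ Algebra.adjoin K (ι K '' (S ∩ T)) := by
  have hrr : ∀ b : FA X, retr T (retr S b) = retr (S ∩ T) b := by
    intro b
    induction b using FreeAlgebra.induction with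
    | grade0 r => rw [AlgHom.commutes, AlgHom.commutes, AlgHom.commutes]
    | grade1 x =>
        rw [retr_ι, retr_ι]
        by_cases hxS : x ∈ S
        · rw [if_pos hxS, retr_ι]
          by_cases hxT : x ∈ T
          · rw [if_pos hxT, if_pos ⟨hxS, hxT⟩]
          · rw [if_neg hxT, if_neg (fun h => hxT h.2)]
        · rw [if_neg hxS, map_zero, if_neg (fun h => hxS h.1)]
    | mul a b ha hb => rw [map_mul, map_mul, map_mul, ha, hb]
    | add a b ha hb => rw [map_add, map_add, map_add, ha, hb]
  have h1 : retr (S ∩ T) a = a := by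
    rw [← hrr, retr_fix S a hS, retr_fix T a hT]
  rw [← h1]
  exact retr_mem _ _
end inter

end QSI

open QSI in
set_option maxHeartbeats 2000000 in
/-- With `(𝒜,∂)` a triangular based DGA over `ℤ/2`, `∂xᵢ = xⱼ + w` as in
Proposition 2.3, `I` the two-sided ideal generated by `xᵢ, ∂xᵢ`, and `p : 𝒜 → Q` a
realization of the quotient `𝒜/I`: letting `E = (𝒜/I)*S` be the free DGA on the residue
generators `{x̄_l : l ∉ {i,j}}` together with `y, z` (generators indexed by
`{l // l ≠ i ∧ l ≠ j} ⊕ Fin 2`, with `y = ι (inr 0)`, `z = ι (inr 1)`, `∂y = z`, `∂z = 0`,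
extending the induced differential of `𝒜/I`), there is a DGA isomorphism `φ : E ≃ 𝒜` with
`φ(y) = xᵢ`, `φ(z) = ∂xᵢ` and `π∘φ⁻¹ = p`, where `π : E → 𝒜/I` restricts to the identity on
`𝒜/I` and kills `y, z`.  Moreover, if `Y` is a set of generators not containing `xᵢ, xⱼ`
whose generated subalgebra is preserved by `∂`, then `φ` can be chosen so that in addition
`φ(x̄_k) = x_k` for all `x_k ∈ Y`. -/
theorem quotient_stabilization_isomorphism
    (n : ℕ)
    (d : FreeAlgebra (ZMod 2) (Fin n) →ₗ[ZMod 2] FreeAlgebra (ZMod 2) (Fin n))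
    (hd_leib : ∀ a b, d (a * b) = d a * b + a * d b)
    (hd_sq : ∀ a, d (d a) = 0)
    (htri : ∀ k : Fin n, d (FreeAlgebra.ι (ZMod 2) k) ∈
      Algebra.adjoin (ZMod 2) (FreeAlgebra.ι (ZMod 2) '' {l : Fin n | l < k}))
    (i j : Fin n) (hji : j < i)
    (w : FreeAlgebra (ZMod 2) (Fin n))
    (hw : w ∈ Algebra.adjoin (ZMod 2) (FreeAlgebra.ι (ZMod 2) '' {l : Fin n | l < j}))
    (hdi : d (FreeAlgebra.ι (ZMod 2) i) = FreeAlgebra.ι (ZMod 2) j + w)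
    (I : TwoSidedIdeal (FreeAlgebra (ZMod 2) (Fin n)))
    (hI : I = TwoSidedIdeal.span
      {FreeAlgebra.ι (ZMod 2) i, d (FreeAlgebra.ι (ZMod 2) i)})
    (Q : Type) [Ring Q] [Algebra (ZMod 2) Q]
    (p : FreeAlgebra (ZMod 2) (Fin n) →ₐ[ZMod 2] Q)
    (hp_surj : Function.Surjective p)
    (hp_ker : ∀ a, p a = 0 ↔ a ∈ I)
    -- the free algebra on the residue generators, its canonical maps to `𝒜` and to `Q`
    (θ : FreeAlgebra (ZMod 2) {l : Fin n // l ≠ i ∧ l ≠ j} →ₐ[ZMod 2]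
      FreeAlgebra (ZMod 2) (Fin n))
    (hθ : ∀ k : {l : Fin n // l ≠ i ∧ l ≠ j},
      θ (FreeAlgebra.ι (ZMod 2) k) = FreeAlgebra.ι (ZMod 2) (k : Fin n))
    (ψ : FreeAlgebra (ZMod 2) {l : Fin n // l ≠ i ∧ l ≠ j} →ₐ[ZMod 2] Q)
    (hψ : ∀ k : {l : Fin n // l ≠ i ∧ l ≠ j},
      ψ (FreeAlgebra.ι (ZMod 2) k) = p (FreeAlgebra.ι (ZMod 2) (k : Fin n)))
    -- the differential of `𝒜/I` transported to the free algebra on the residue generators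
    (d' : FreeAlgebra (ZMod 2) {l : Fin n // l ≠ i ∧ l ≠ j} →ₗ[ZMod 2]
      FreeAlgebra (ZMod 2) {l : Fin n // l ≠ i ∧ l ≠ j})
    (hd'_leib : ∀ a b, d' (a * b) = d' a * b + a * d' b)
    (hd' : ∀ a, ψ (d' a) = p (d (θ a)))
    -- the stabilization `E = (𝒜/I)*S`
    (κ : FreeAlgebra (ZMod 2) {l : Fin n // l ≠ i ∧ l ≠ j} →ₐ[ZMod 2]
      FreeAlgebra (ZMod 2) ({l : Fin n // l ≠ i ∧ l ≠ j} ⊕ Fin 2))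
    (hκ : ∀ k : {l : Fin n // l ≠ i ∧ l ≠ j},
      κ (FreeAlgebra.ι (ZMod 2) k) = FreeAlgebra.ι (ZMod 2) (Sum.inl k))
    (dE : FreeAlgebra (ZMod 2) ({l : Fin n // l ≠ i ∧ l ≠ j} ⊕ Fin 2) →ₗ[ZMod 2]
      FreeAlgebra (ZMod 2) ({l : Fin n // l ≠ i ∧ l ≠ j} ⊕ Fin 2))
    (hdE_leib : ∀ a b, dE (a * b) = dE a * b + a * dE b)
    (hdE_gen : ∀ k : {l : Fin n // l ≠ i ∧ l ≠ j},
      dE (FreeAlgebra.ι (ZMod 2) (Sum.inl k)) = κ (d' (FreeAlgebra.ι (ZMod 2) k)))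
    (hdE_y : dE (FreeAlgebra.ι (ZMod 2) (Sum.inr (0 : Fin 2))) =
      FreeAlgebra.ι (ZMod 2) (Sum.inr (1 : Fin 2)))
    (hdE_z : dE (FreeAlgebra.ι (ZMod 2) (Sum.inr (1 : Fin 2))) = 0)
    -- the projection `π : (𝒜/I)*S → 𝒜/I`
    (π : FreeAlgebra (ZMod 2) ({l : Fin n // l ≠ i ∧ l ≠ j} ⊕ Fin 2) →ₐ[ZMod 2] Q)
    (hπ_gen : ∀ k : {l : Fin n // l ≠ i ∧ l ≠ j},
      π (FreeAlgebra.ι (ZMod 2) (Sum.inl k)) = p (FreeAlgebra.ι (ZMod 2) (k : Fin n)))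
    (hπ_yz : ∀ t : Fin 2, π (FreeAlgebra.ι (ZMod 2) (Sum.inr t)) = 0)
    -- a set of generators avoiding `xᵢ, xⱼ` generating a `∂`-stable subalgebra
    (Y : Set (Fin n)) (hYi : i ∉ Y) (hYj : j ∉ Y)
    (hY_closed : ∀ a ∈ Algebra.adjoin (ZMod 2) (FreeAlgebra.ι (ZMod 2) '' Y),
      d a ∈ Algebra.adjoin (ZMod 2) (FreeAlgebra.ι (ZMod 2) '' Y)) :
    ∃ φ : FreeAlgebra (ZMod 2) ({l : Fin n // l ≠ i ∧ l ≠ j} ⊕ Fin 2) ≃ₐ[ZMod 2]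
        FreeAlgebra (ZMod 2) (Fin n),
      (∀ e, d (φ e) = φ (dE e)) ∧
      φ (FreeAlgebra.ι (ZMod 2) (Sum.inr (0 : Fin 2))) = FreeAlgebra.ι (ZMod 2) i ∧
      φ (FreeAlgebra.ι (ZMod 2) (Sum.inr (1 : Fin 2))) = d (FreeAlgebra.ι (ZMod 2) i) ∧
      (∀ a, π (φ.symm a) = p a) ∧
      (∀ k : {l : Fin n // l ≠ i ∧ l ≠ j}, (k : Fin n) ∈ Y →
        φ (FreeAlgebra.ι (ZMod 2) (Sum.inl k)) = FreeAlgebra.ι (ZMod 2) (k : Fin n)) := by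
  classical
  have hji' : j ≠ i := ne_of_lt hji
  have hij : i ≠ j := (ne_of_lt hji).symm
  -- helper: a derivation kills algebraMap
  have hd1 : ∀ r : ZMod 2, d (algebraMap (ZMod 2) _ r) = 0 := fun r =>
    leib_algebraMap (AlgHom.id K _) d (fun a b => by simpa using hd_leib a b) r
  have hdE1 : ∀ r : ZMod 2, dE (algebraMap (ZMod 2) _ r) = 0 := fun r =>
    leib_algebraMap (AlgHom.id K _) dE (fun a b => by simpa using hdE_leib a b) r
  have hd'1 : ∀ r : ZMod 2, d' (algebraMap (ZMod 2) _ r) = 0 := fun r =>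
    leib_algebraMap (AlgHom.id K _) d' (fun a b => by simpa using hd'_leib a b) r
  -- membership of generators of I
  have hxiI : FreeAlgebra.ι (ZMod 2) i ∈ I := by
    rw [hI]; exact TwoSidedIdeal.subset_span (Set.mem_insert _ _)
  have hdxiI : d (FreeAlgebra.ι (ZMod 2) i) ∈ I := by
    rw [hI]; exact TwoSidedIdeal.subset_span (Set.mem_insert_of_mem _ rfl)
  have p0 : p (FreeAlgebra.ι (ZMod 2) i) = 0 := (hp_ker _).mpr hxiI
  have pd0 : p (d (FreeAlgebra.ι (ZMod 2) i)) = 0 := (hp_ker _).mpr hdxiI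
  have hpj : p (FreeAlgebra.ι (ZMod 2) j) = p w := by
    apply Qch2cancel
    rw [← map_add, ← hdi, pd0]
  -- the retraction ρ' and the lift w' of w
  set ρ' : FreeAlgebra (ZMod 2) (Fin n) →ₐ[ZMod 2]
      FreeAlgebra (ZMod 2) {l : Fin n // l ≠ i ∧ l ≠ j} :=
    FreeAlgebra.lift (ZMod 2) (fun l : Fin n =>
      if h : l ≠ i ∧ l ≠ j then FreeAlgebra.ι (ZMod 2)
        (⟨l, h⟩ : {l : Fin n // l ≠ i ∧ l ≠ j}) else 0) with hρ'def
  have hρ'ι : ∀ (l : Fin n) (h : l ≠ i ∧ l ≠ j),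
      ρ' (FreeAlgebra.ι (ZMod 2) l) = FreeAlgebra.ι (ZMod 2) (⟨l, h⟩ : {m : Fin n // m ≠ i ∧ m ≠ j}) := by
    intro l h
    rw [hρ'def, FreeAlgebra.lift_ι_apply, dif_pos h]
  set w' := ρ' w with hw'def
  have hlowne : ∀ l : Fin n, l < j → l ≠ i ∧ l ≠ j :=
    fun l hl => ⟨ne_of_lt (lt_trans hl hji), ne_of_lt hl⟩
  have hθw : θ w' = w := by
    rw [hw'def]
    have := alg_eqOn (θ.comp ρ') (AlgHom.id (ZMod 2) _)
      (FreeAlgebra.ι (ZMod 2) '' {l : Fin n | l < j}) ?_ w hw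
    · simpa using this
    · rintro x ⟨l, hl, rfl⟩
      have h := hlowne l hl
      simp only [AlgHom.comp_apply, AlgHom.id_apply]
      rw [hρ'ι l h, hθ]
  -- the chain retraction σ
  set σ : FreeAlgebra (ZMod 2) (Fin n) →ₐ[ZMod 2]
      FreeAlgebra (ZMod 2) {l : Fin n // l ≠ i ∧ l ≠ j} :=
    FreeAlgebra.lift (ZMod 2) (fun l : Fin n =>
      if h : l ≠ i ∧ l ≠ j then FreeAlgebra.ι (ZMod 2)
        (⟨l, h⟩ : {l : Fin n // l ≠ i ∧ l ≠ j})
      else if l = j then w' else 0) with hσdef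
  have hσι : ∀ (l : Fin n) (h : l ≠ i ∧ l ≠ j),
      σ (FreeAlgebra.ι (ZMod 2) l) = FreeAlgebra.ι (ZMod 2) (⟨l, h⟩ : {m : Fin n // m ≠ i ∧ m ≠ j}) := by
    intro l h
    rw [hσdef, FreeAlgebra.lift_ι_apply, dif_pos h]
  have hσi : σ (FreeAlgebra.ι (ZMod 2) i) = 0 := by
    rw [hσdef, FreeAlgebra.lift_ι_apply, dif_neg (by simp), if_neg hij]
  have hσj : σ (FreeAlgebra.ι (ZMod 2) j) = w' := by
    rw [hσdef, FreeAlgebra.lift_ι_apply, dif_neg (by simp), if_pos rfl]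
  have hσw : σ w = w' := by
    rw [hw'def]
    refine alg_eqOn σ ρ' (FreeAlgebra.ι (ZMod 2) '' {l : Fin n | l < j}) ?_ w hw
    rintro x ⟨l, hl, rfl⟩
    rw [hσι l (hlowne l hl), hρ'ι l (hlowne l hl)]
  have hσdxi : σ (d (FreeAlgebra.ι (ZMod 2) i)) = 0 := by
    rw [hdi, map_add, hσj, hσw, ch2]
  -- σ kills I
  have hσI : ∀ a ∈ I, σ a = 0 := by
    intro a ha
    set J : TwoSidedIdeal (FreeAlgebra (ZMod 2) (Fin n)) :=
      TwoSidedIdeal.mk' {a | σ a = 0} (map_zero σ)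
        (fun hx hy => by simp only [Set.mem_setOf_eq] at *; rw [map_add, hx, hy, add_zero])
        (fun hx => by simp only [Set.mem_setOf_eq] at *; rw [map_neg, hx, neg_zero])
        (fun hy => by simp only [Set.mem_setOf_eq] at *; rw [map_mul, hy, mul_zero])
        (fun hx => by simp only [Set.mem_setOf_eq] at *; rw [map_mul, hx, zero_mul])
      with hJdef
    have hJmem : ∀ b, σ b = 0 → b ∈ J := by
      intro b hb
      rw [hJdef]
      exact (TwoSidedIdeal.mem_mk' _ _ _ _ _ _ b).mpr hb
    have haJ : a ∈ J := by
      rw [hI] at ha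
      refine TwoSidedIdeal.mem_span_iff.mp ha J ?_
      rintro x hx
      simp only [Set.mem_insert_iff, Set.mem_singleton_iff] at hx
      rcases hx with rfl | rfl
      · exact SetLike.mem_coe.mpr (hJmem _ hσi)
      · exact SetLike.mem_coe.mpr (hJmem _ hσdxi)
    rw [hJdef] at haJ
    exact (TwoSidedIdeal.mem_mk' _ _ _ _ _ _ a).mp haJ
  have hσθ : ∀ b, σ (θ b) = b := by
    intro b
    induction b using FreeAlgebra.induction with
    | grade0 r => simp only [AlgHom.commutes]
    | grade1 k => rw [hθ, hσι _ k.2]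
    | mul a b ha hb => simp only [map_mul, ha, hb]
    | add a b ha hb => simp only [map_add, ha, hb]
  have hψθ : ∀ b, ψ b = p (θ b) := by
    intro b
    induction b using FreeAlgebra.induction with
    | grade0 r => simp only [AlgHom.commutes]
    | grade1 k => rw [hθ, hψ]
    | mul a b ha hb => simp only [map_mul, ha, hb]
    | add a b ha hb => simp only [map_add, ha, hb]
  have hψinj : Function.Injective ψ := by
    intro a b hab
    have h1 : p (θ (a - b)) = 0 := by
      rw [map_sub, map_sub, ← hψθ, ← hψθ, hab, sub_self]
    have h2 : θ (a - b) ∈ I := (hp_ker _).mp h1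
    have h3 := hσI _ h2
    rw [hσθ] at h3
    exact sub_eq_zero.mp h3
  have hpσ : ∀ a, p a = ψ (σ a) := by
    intro a
    induction a using FreeAlgebra.induction with
    | grade0 r => simp only [AlgHom.commutes]
    | grade1 l =>
        by_cases h : l ≠ i ∧ l ≠ j
        · rw [hσι l h, hψ]
        · by_cases hli : l = i
          · subst hli
            rw [hσi, map_zero, p0]
          · have hlj : l = j := by
              rcases not_and_or.mp h with h1 | h2
              · exact absurd hli (by simpa using h1)
              · simpa using h2
            subst hlj
            rw [hσj, hψθ, hθw, hpj]
    | mul a b ha hb => simp only [map_mul, ha, hb]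
    | add a b ha hb => simp only [map_add, ha, hb]
  have hd'σ : ∀ b, d' b = σ (d (θ b)) := by
    intro b
    apply hψinj
    rw [hd', hpσ (d (θ b))]
  have hIclosed : ∀ a ∈ I, p (d a) = 0 := by
    intro a ha
    set J : TwoSidedIdeal (FreeAlgebra (ZMod 2) (Fin n)) :=
      TwoSidedIdeal.mk' {a | p a = 0 ∧ p (d a) = 0}
        (⟨map_zero p, by rw [map_zero, map_zero]⟩)
        (fun hx hy => ⟨by rw [map_add, hx.1, hy.1, add_zero],
          by rw [map_add, map_add, hx.2, hy.2, add_zero]⟩)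
        (fun hx => ⟨by rw [map_neg, hx.1, neg_zero],
          by rw [map_neg, map_neg, hx.2, neg_zero]⟩)
        (fun hy => ⟨by rw [map_mul, hy.1, mul_zero],
          by rw [hd_leib, map_add, map_mul, map_mul, hy.1, hy.2, mul_zero, mul_zero, add_zero]⟩)
        (fun hx => ⟨by rw [map_mul, hx.1, zero_mul],
          by rw [hd_leib, map_add, map_mul, map_mul, hx.1, hx.2, zero_mul, zero_mul, add_zero]⟩)
      with hJdef
    have hJmem : ∀ b, p b = 0 ∧ p (d b) = 0 → b ∈ J := by
      intro b hb
      rw [hJdef]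
      exact (TwoSidedIdeal.mem_mk' _ _ _ _ _ _ b).mpr hb
    have haJ : a ∈ J := by
      rw [hI] at ha
      refine TwoSidedIdeal.mem_span_iff.mp ha J ?_
      rintro x hx
      simp only [Set.mem_insert_iff, Set.mem_singleton_iff] at hx
      rcases hx with rfl | rfl
      · exact SetLike.mem_coe.mpr (hJmem _ ⟨p0, pd0⟩)
      · exact SetLike.mem_coe.mpr (hJmem _ ⟨pd0, by rw [hd_sq, map_zero]⟩)
    rw [hJdef] at haJ
    exact ((TwoSidedIdeal.mem_mk' _ _ _ _ _ _ a).mp haJ).2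
  have hpd : ∀ u v, p u = p v → p (d u) = p (d v) := by
    intro u v huv
    have h1 : p (u - v) = 0 := by rw [map_sub, huv, sub_self]
    have h2 := hIclosed _ ((hp_ker _).mp h1)
    rw [map_sub, map_sub, sub_eq_zero] at h2
    exact h2
  have hd'd' : ∀ b, d' (d' b) = 0 := by
    intro b
    apply hψinj
    rw [map_zero, hd']
    have h1 : p (θ (d' b)) = p (d (θ b)) := by rw [← hψθ, hd']
    rw [hpd _ _ h1, hd_sq, map_zero]
  have hdEκ : ∀ b, dE (κ b) = κ (d' b) := by
    intro b
    induction b using FreeAlgebra.induction with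
    | grade0 r =>
        rw [AlgHom.commutes, hdE1, hd'1, map_zero]
    | grade1 k => rw [hκ, hdE_gen]
    | mul a b ha hb =>
        rw [map_mul, hdE_leib, hd'_leib, map_add, map_mul, map_mul, ha, hb]
    | add a b ha hb => simp only [map_add, ha, hb]
  have hπκ : ∀ b, π (κ b) = ψ b := by
    intro b
    induction b using FreeAlgebra.induction with
    | grade0 r => simp only [AlgHom.commutes]
    | grade1 k => rw [hκ, hπ_gen, hψ]
    | mul a b ha hb => simp only [map_mul, ha, hb]
    | add a b ha hb => simp only [map_add, ha, hb]
  -- the algebra projection P onto the special-letter-free part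
  set collapse : FreeAlgebra (ZMod 2) ({l : Fin n // l ≠ i ∧ l ≠ j} ⊕ Fin 2) →ₐ[ZMod 2]
      FreeAlgebra (ZMod 2) {l : Fin n // l ≠ i ∧ l ≠ j} :=
    FreeAlgebra.lift (ZMod 2) (Sum.elim
      (fun v : {l : Fin n // l ≠ i ∧ l ≠ j} => FreeAlgebra.ι (ZMod 2) v)
      (fun _ : Fin 2 => 0)) with hcoldef
  set P := κ.comp collapse with hPdef
  have hcolinl : ∀ v, collapse (FreeAlgebra.ι (ZMod 2) (Sum.inl v)) =
      FreeAlgebra.ι (ZMod 2) v := by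
    intro v; rw [hcoldef, FreeAlgebra.lift_ι_apply]; rfl
  have hcolinr : ∀ t : Fin 2, collapse (FreeAlgebra.ι (ZMod 2) (Sum.inr t)) = 0 := by
    intro t; rw [hcoldef, FreeAlgebra.lift_ι_apply]; rfl
  have hPinl : ∀ v, P (FreeAlgebra.ι (ZMod 2) (Sum.inl v)) =
      FreeAlgebra.ι (ZMod 2) (Sum.inl v) := by
    intro v; rw [hPdef, AlgHom.comp_apply, hcolinl, hκ]
  have hPinr : ∀ t : Fin 2, P (FreeAlgebra.ι (ZMod 2) (Sum.inr t)) = 0 := by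
    intro t; rw [hPdef, AlgHom.comp_apply, hcolinr, map_zero]
  have hπP : ∀ m, π (P m) = π m := by
    intro m
    induction m using FreeAlgebra.induction with
    | grade0 r => simp only [AlgHom.commutes]
    | grade1 x =>
        rcases x with v | t
        · rw [hPinl]
        · rw [hPinr, map_zero, hπ_yz]
    | mul a b ha hb => simp only [map_mul, ha, hb]
    | add a b ha hb => simp only [map_add, ha, hb]
  have hPzero : ∀ m, π m = 0 → P m = 0 := by
    intro m hm
    have h1 : ψ (collapse m) = 0 := by
      have h2 : π (P m) = π m := hπP m
      rw [hPdef, AlgHom.comp_apply, hπκ] at h2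
      rw [h2, hm]
    have h2 : collapse m = 0 := hψinj (by rw [h1, map_zero])
    rw [hPdef, AlgHom.comp_apply, h2, map_zero]
  -- the homotopy identity applied to our dE
  have hκadj : ∀ b, κ b ∈ Algebra.adjoin (ZMod 2)
      (FreeAlgebra.ι (ZMod 2) '' Set.range (Sum.inl :
        {l : Fin n // l ≠ i ∧ l ≠ j} → {l : Fin n // l ≠ i ∧ l ≠ j} ⊕ Fin 2)) := by
    intro b
    refine alg_mapsTo κ (Set.range (FreeAlgebra.ι (ZMod 2))) _ ?_ b (mem_adjoin_range b)
    rintro x ⟨v, rfl⟩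
    rw [hκ]
    exact Algebra.subset_adjoin ⟨Sum.inl v, ⟨v, rfl⟩, rfl⟩
  have hom_id : ∀ m, dE (hmap m) + hmap (dE m) + m + P m = 0 := by
    refine homotopy_id dE hdE_leib ?_ hdE_y hdE_z P hPinl hPinr
    intro v
    rw [hdE_gen]
    exact hκadj _
  -- the recursively defined morphism α
  set α : FreeAlgebra (ZMod 2) (Fin n) →ₐ[ZMod 2]
      FreeAlgebra (ZMod 2) ({l : Fin n // l ≠ i ∧ l ≠ j} ⊕ Fin 2) :=
    FreeAlgebra.lift (ZMod 2) (fun k : Fin n => FsD n i j w d d' κ (k.val + 1) k) with hαdef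
  have hFk : ∀ k : Fin n, α (FreeAlgebra.ι (ZMod 2) k)
      = newval n i j w d d' κ
          (fun l => if l.val < k.val then FsD n i j w d d' κ k.val l else 0) k := by
    intro k
    rw [hαdef, FreeAlgebra.lift_ι_apply]
    show FsD n i j w d d' κ (k.val + 1) k = _
    simp only [FsD]
    simp
  have truncAgree : ∀ k : Fin n, ∀ a ∈ Algebra.adjoin (ZMod 2)
      (FreeAlgebra.ι (ZMod 2) '' {l : Fin n | l < k}),
      (FreeAlgebra.lift (ZMod 2)
        (fun l : Fin n => if l.val < k.val then FsD n i j w d d' κ k.val l else 0)) a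
        = α a := by
    intro k
    apply alg_eqOn
    rintro x ⟨l, hl, rfl⟩
    have hl' : l.val < k.val := hl
    rw [FreeAlgebra.lift_ι_apply, if_pos hl', hαdef, FreeAlgebra.lift_ι_apply]
    exact FsD_stable n i j w d d' κ (l.val + 1) k.val (by omega) l (by omega)
  -- explicit values on the distinguished generators
  have hα_i : α (FreeAlgebra.ι (ZMod 2) i) = FreeAlgebra.ι (ZMod 2) (Sum.inr (0 : Fin 2)) := by
    rw [hFk i]
    simp only [newval]
    simp
  have hα_j : α (FreeAlgebra.ι (ZMod 2) j)
      = FreeAlgebra.ι (ZMod 2) (Sum.inr (1 : Fin 2)) + α w := by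
    have h1 := truncAgree j w hw
    rw [hFk j]
    simp only [newval]
    rw [dif_neg hji']
    simp only [↓reduceDIte]
    rw [h1]
  have hα_k : ∀ (k : Fin n) (hki : k ≠ i) (hkj : k ≠ j),
      α (FreeAlgebra.ι (ZMod 2) k)
        = FreeAlgebra.ι (ZMod 2) (Sum.inl ⟨k, hki, hkj⟩) +
          hmap (α (d (FreeAlgebra.ι (ZMod 2) k)) +
            κ (d' (FreeAlgebra.ι (ZMod 2) (⟨k, hki, hkj⟩ : {m : Fin n // m ≠ i ∧ m ≠ j})))) := by
    intro k hki hkj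
    have h1 := truncAgree k _ (htri k)
    rw [hFk k]
    simp only [newval]
    rw [dif_neg hki, dif_neg hkj, h1]
  -- level function and generator bijection
  set genOf : Fin n → ({l : Fin n // l ≠ i ∧ l ≠ j} ⊕ Fin 2) :=
    fun k => if hki : k = i then Sum.inr 0
      else if hkj : k = j then Sum.inr 1 else Sum.inl ⟨k, hki, hkj⟩ with hgenOfdef
  set lv : ({l : Fin n // l ≠ i ∧ l ≠ j} ⊕ Fin 2) → ℕ :=
    Sum.elim
      (fun v : {l : Fin n // l ≠ i ∧ l ≠ j} =>
        if v.1.val < j.val then 2 * v.1.val else 2 * v.1.val + 2)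
      (fun t : Fin 2 => if t = 1 then 2 * j.val + 1 else 2 * j.val) with hlvdef
  have hgen_i : genOf i = Sum.inr 0 := by rw [hgenOfdef]; simp
  have hgen_j : genOf j = Sum.inr 1 := by
    rw [hgenOfdef]; simp [hji']
  have hgen_k : ∀ (k : Fin n) (hki : k ≠ i) (hkj : k ≠ j),
      genOf k = Sum.inl ⟨k, hki, hkj⟩ := by
    intro k hki hkj
    rw [hgenOfdef]; simp [hki, hkj]
  have hlv_inl : ∀ v : {l : Fin n // l ≠ i ∧ l ≠ j},
      lv (Sum.inl v) = if v.1.val < j.val then 2 * v.1.val else 2 * v.1.val + 2 := by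
    intro v; rw [hlvdef]; rfl
  have hlv_y : lv (Sum.inr 0) = 2 * j.val := by rw [hlvdef]; simp
  have hlv_z : lv (Sum.inr 1) = 2 * j.val + 1 := by rw [hlvdef]; simp
  have hlv_inl' : ∀ (l : Fin n) (h1 : l ≠ i) (h2 : l ≠ j),
      lv (Sum.inl ⟨l, h1, h2⟩) = if l.val < j.val then 2 * l.val else 2 * l.val + 2 :=
    fun l h1 h2 => hlv_inl ⟨l, h1, h2⟩
  have MAIN : ∀ N : ℕ, ∀ k : Fin n, k.val < N →
      ((dE (α (FreeAlgebra.ι (ZMod 2) k)) = α (d (FreeAlgebra.ι (ZMod 2) k))) ∧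
       (π (α (FreeAlgebra.ι (ZMod 2) k)) = p (FreeAlgebra.ι (ZMod 2) k)) ∧
       ((k ∈ Y ∨ k < j) → ∀ (hki : k ≠ i) (hkj : k ≠ j),
          α (FreeAlgebra.ι (ZMod 2) k)
            = FreeAlgebra.ι (ZMod 2) (Sum.inl ⟨k, hki, hkj⟩)) ∧
       (∃ t ∈ Algebra.adjoin (ZMod 2) (FreeAlgebra.ι (ZMod 2) ''
           {x : {l : Fin n // l ≠ i ∧ l ≠ j} ⊕ Fin 2 | lv x < lv (genOf k)}),
          α (FreeAlgebra.ι (ZMod 2) k) = FreeAlgebra.ι (ZMod 2) (genOf k) + t)) := by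
    intro N
    induction N with
    | zero => intro k hk; exact absurd hk (Nat.not_lt_zero _)
    | succ N ihN =>
      have chainOn : ∀ k : Fin n, k.val ≤ N → ∀ a ∈ Algebra.adjoin (ZMod 2)
          (FreeAlgebra.ι (ZMod 2) '' {l : Fin n | l < k}), dE (α a) = α (d a) := by
        intro k hk
        have h0 := leib_eqOn α (dE.comp α.toLinearMap) (α.toLinearMap.comp d)
          (fun a b => by
            simp only [LinearMap.comp_apply, AlgHom.toLinearMap_apply, map_mul, hdE_leib])
          (fun a b => by
            simp only [LinearMap.comp_apply, AlgHom.toLinearMap_apply, hd_leib,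
              map_add, map_mul])
          (FreeAlgebra.ι (ZMod 2) '' {l : Fin n | l < k}) ?_
        · intro a ha
          have h1 := h0 a ha
          simpa using h1
        · rintro x ⟨l, hl, rfl⟩
          have hlk : l.val < k.val := hl
          have h1 := (ihN l (by omega)).1
          simpa using h1
      have piOn : ∀ k : Fin n, k.val ≤ N → ∀ a ∈ Algebra.adjoin (ZMod 2)
          (FreeAlgebra.ι (ZMod 2) '' {l : Fin n | l < k}), π (α a) = p a := by
        intro k hk
        have h0 := alg_eqOn (π.comp α) p (FreeAlgebra.ι (ZMod 2) '' {l : Fin n | l < k}) ?_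
        · intro a ha
          have h1 := h0 a ha
          simpa using h1
        · rintro x ⟨l, hl, rfl⟩
          have hlk : l.val < k.val := hl
          have h1 := (ihN l (by omega)).2.1
          simpa using h1
      intro k hk
      have hkN : k.val ≤ N := Nat.lt_succ_iff.mp hk
      by_cases hki : k = i
      · subst hki
        refine ⟨?_, ?_, ?_, ?_⟩
        · rw [hα_i, hdE_y, hdi, map_add, hα_j, add_assoc, ch2, add_zero]
        · rw [hα_i, hπ_yz, p0]
        · intro _ hki' _
          exact absurd rfl hki'
        · exact ⟨0, zero_mem _, by rw [hα_i, hgen_i, add_zero]⟩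
      · by_cases hkj : k = j
        · subst hkj
          have hdj : d (FreeAlgebra.ι (ZMod 2) k) = d w := by
            apply ch2cancel
            rw [← map_add, ← hdi, hd_sq]
          refine ⟨?_, ?_, ?_, ?_⟩
          · rw [hα_j, map_add, hdE_z, zero_add, chainOn k hkN w hw, hdj]
          · rw [hα_j, map_add, hπ_yz, zero_add, piOn k hkN w hw, hpj]
          · intro _ _ hkj'
            exact absurd rfl hkj'
          · refine ⟨α w, ?_, by rw [hα_j, hgen_j]⟩
            refine alg_mapsTo α _ _ ?_ w hw
            rintro x ⟨l, hl, rfl⟩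
            have hl' : l < k := hl
            have hl'' : l.val < k.val := hl'
            have hne := hlowne l hl'
            have h3 := (ihN l (by omega)).2.2.1 (Or.inr hl') hne.1 hne.2
            rw [h3]
            refine Algebra.subset_adjoin ⟨Sum.inl ⟨l, hne.1, hne.2⟩, ?_, rfl⟩
            show lv (Sum.inl ⟨l, hne.1, hne.2⟩) < lv (genOf k)
            rw [hgen_j, hlv_inl' l hne.1 hne.2, hlv_z, if_pos ?_]
            · omega
            · omega
        · -- generic generator
          set c := α (d (FreeAlgebra.ι (ZMod 2) k)) +
            κ (d' (FreeAlgebra.ι (ZMod 2)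
              (⟨k, hki, hkj⟩ : {m : Fin n // m ≠ i ∧ m ≠ j}))) with hcdef
          have h5 : d' (FreeAlgebra.ι (ZMod 2)
              (⟨k, hki, hkj⟩ : {m : Fin n // m ≠ i ∧ m ≠ j}))
              = σ (d (FreeAlgebra.ι (ZMod 2) k)) := by
            rw [hd'σ, hθ]
          have hπc : π c = 0 := by
            rw [hcdef, map_add, piOn k hkN _ (htri k), hπκ, hd', hθ]
            exact Qch2 _
          have hdEc : dE c = 0 := by
            rw [hcdef, map_add]
            have h1 : dE (α (d (FreeAlgebra.ι (ZMod 2) k)))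
                = α (d (d (FreeAlgebra.ι (ZMod 2) k))) := chainOn k hkN _ (htri k)
            rw [h1, hd_sq, map_zero, zero_add, hdEκ, hd'd', map_zero]
          have hhc : dE (hmap c) = c := by
            have h0 := hom_id c
            rw [hdEc, map_zero, add_zero, hPzero c hπc, add_zero] at h0
            exact ch2cancel h0
          have hc0 : (k ∈ Y ∨ k < j) → c = 0 := by
            intro hY2
            have hdS : d (FreeAlgebra.ι (ZMod 2) k) ∈ Algebra.adjoin (ZMod 2)
                (FreeAlgebra.ι (ZMod 2) '' {l : Fin n | l < k ∧ (l ∈ Y ∨ l < j)}) := by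
              rcases hY2 with hYk | hklow
              · have h2 : d (FreeAlgebra.ι (ZMod 2) k) ∈ Algebra.adjoin (ZMod 2)
                    (FreeAlgebra.ι (ZMod 2) '' Y) :=
                  hY_closed _ (Algebra.subset_adjoin ⟨k, hYk, rfl⟩)
                have h3 := adjoin_inter _ _ _ (htri k) h2
                refine Algebra.adjoin_mono (Set.image_mono ?_) h3
                rintro l ⟨hlk, hlY⟩
                exact ⟨hlk, Or.inl hlY⟩
              · refine Algebra.adjoin_mono (Set.image_mono ?_) (htri k)
                intro l hlk
                exact ⟨hlk, Or.inr (lt_trans hlk hklow)⟩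
            have hακσ : ∀ a ∈ Algebra.adjoin (ZMod 2)
                (FreeAlgebra.ι (ZMod 2) '' {l : Fin n | l < k ∧ (l ∈ Y ∨ l < j)}),
                α a = κ (σ a) := by
              have h6 := alg_eqOn α (κ.comp σ)
                (FreeAlgebra.ι (ZMod 2) '' {l : Fin n | l < k ∧ (l ∈ Y ∨ l < j)}) ?_
              · intro a ha
                simpa using h6 a ha
              · rintro x ⟨l, hl, rfl⟩
                obtain ⟨hlk, hlY⟩ := hl
                have hlk' : l.val < k.val := hlk
                have hlne : l ≠ i ∧ l ≠ j := by
                  rcases hlY with hlY | hlj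
                  · exact ⟨fun h => hYi (h ▸ hlY), fun h => hYj (h ▸ hlY)⟩
                  · exact hlowne l hlj
                have h7 := (ihN l (by omega)).2.2.1 hlY hlne.1 hlne.2
                rw [h7]
                show _ = (κ.comp σ) _
                rw [AlgHom.comp_apply, hσι l hlne, hκ]
            have h4 : α (d (FreeAlgebra.ι (ZMod 2) k))
                = κ (σ (d (FreeAlgebra.ι (ZMod 2) k))) := hακσ _ hdS
            rw [hcdef, h4, h5, ch2]
          refine ⟨?_, ?_, ?_, ?_⟩
          · rw [hα_k k hki hkj, ← hcdef, map_add, hdE_gen, hhc, hcdef]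
            have hre : ∀ u v : FreeAlgebra (ZMod 2)
                ({l : Fin n // l ≠ i ∧ l ≠ j} ⊕ Fin 2), u + (v + u) = v + (u + u) := by
              intro u v; abel
            rw [hre, ch2, add_zero]
          · rw [hα_k k hki hkj, ← hcdef, map_add, hπ_gen, hmap_pi π hπ_yz c, add_zero]
          · intro hY2 hki' hkj'
            rw [hα_k k hki hkj, ← hcdef, hc0 hY2, map_zero, add_zero]
          · by_cases hkj3 : k < j
            · refine ⟨0, zero_mem _, ?_⟩
              rw [hα_k k hki hkj, ← hcdef, hc0 (Or.inr hkj3), map_zero, add_zero, add_zero,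
                hgen_k k hki hkj]
            · have hjk : j < k := lt_of_le_of_ne (not_lt.mp hkj3) (fun h => hkj h.symm)
              have hjk' : j.val < k.val := hjk
              have hlvk : lv (genOf k) = 2 * k.val + 2 := by
                rw [hgen_k k hki hkj, hlv_inl' k hki hkj, if_neg (by omega)]
              have hbound : ∀ l : Fin n, l < k → lv (genOf l) < lv (genOf k) := by
                intro l hlk
                have hlk' : l.val < k.val := hlk
                rw [hlvk]
                by_cases hli : l = i
                · subst hli; rw [hgen_i, hlv_y]; omega
                · by_cases hlj : l = j
                  · subst hlj; rw [hgen_j, hlv_z]; omega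
                  · rw [hgen_k l hli hlj, hlv_inl' l hli hlj]
                    split_ifs <;> omega
              have hα_mem : α (d (FreeAlgebra.ι (ZMod 2) k)) ∈ Algebra.adjoin (ZMod 2)
                  (FreeAlgebra.ι (ZMod 2) ''
                    {x : {l : Fin n // l ≠ i ∧ l ≠ j} ⊕ Fin 2 | lv x < lv (genOf k)}) := by
                refine alg_mapsTo α _ _ ?_ _ (htri k)
                rintro x ⟨l, hl, rfl⟩
                have hl' : l < k := hl
                have hl'' : l.val < k.val := hl'
                obtain ⟨t0, ht0, heq⟩ := (ihN l (by omega)).2.2.2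
                rw [heq]
                refine add_mem (Algebra.subset_adjoin ⟨genOf l, hbound l hl', rfl⟩)
                  (Algebra.adjoin_mono (Set.image_mono ?_) ht0)
                intro x hx
                exact lt_trans hx (hbound l hl')
              have hκσ_mem : κ (σ (d (FreeAlgebra.ι (ZMod 2) k))) ∈ Algebra.adjoin (ZMod 2)
                  (FreeAlgebra.ι (ZMod 2) ''
                    {x : {l : Fin n // l ≠ i ∧ l ≠ j} ⊕ Fin 2 | lv x < lv (genOf k)}) := by
                have h8 : ∀ a ∈ Algebra.adjoin (ZMod 2)
                    (FreeAlgebra.ι (ZMod 2) '' {l : Fin n | l < k}),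
                    (κ.comp σ) a ∈ Algebra.adjoin (ZMod 2)
                      (FreeAlgebra.ι (ZMod 2) ''
                        {x : {l : Fin n // l ≠ i ∧ l ≠ j} ⊕ Fin 2 |
                          lv x < lv (genOf k)}) := by
                  refine alg_mapsTo _ _ _ ?_
                  rintro x ⟨l, hl, rfl⟩
                  have hl' : l < k := hl
                  have hl'' : l.val < k.val := hl'
                  rw [AlgHom.comp_apply]
                  by_cases hli : l = i
                  · subst hli; rw [hσi, map_zero]; exact zero_mem _
                  · by_cases hlj : l = j
                    · rw [hlj, hσj]
                      have hw'mem : w' ∈ Algebra.adjoin (ZMod 2)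
                          (FreeAlgebra.ι (ZMod 2) ''
                            {v : {m : Fin n // m ≠ i ∧ m ≠ j} | (v : Fin n) < j}) := by
                        rw [hw'def]
                        refine alg_mapsTo ρ' _ _ ?_ w hw
                        rintro x ⟨m, hm, rfl⟩
                        have hm' : m < j := hm
                        rw [hρ'ι m (hlowne m hm')]
                        exact Algebra.subset_adjoin ⟨⟨m, hlowne m hm'⟩, hm', rfl⟩
                      refine alg_mapsTo κ _ _ ?_ w' hw'mem
                      rintro x ⟨v, hv, rfl⟩
                      have hv' : v.1.val < j.val := hv
                      rw [hκ]
                      refine Algebra.subset_adjoin ⟨Sum.inl v, ?_, rfl⟩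
                      show lv (Sum.inl v) < lv (genOf k)
                      rw [hlv_inl, hlvk, if_pos (by omega)]
                      omega
                    · rw [hσι l ⟨hli, hlj⟩, hκ]
                      refine Algebra.subset_adjoin ⟨Sum.inl ⟨l, hli, hlj⟩, ?_, rfl⟩
                      show lv (Sum.inl ⟨l, hli, hlj⟩) < lv (genOf k)
                      rw [hlv_inl' l hli hlj, hlvk]
                      split_ifs <;> omega
                have h9 := h8 _ (htri k)
                simpa using h9
              have hc_mem : c ∈ Algebra.adjoin (ZMod 2)
                  (FreeAlgebra.ι (ZMod 2) ''
                    {x : {l : Fin n // l ≠ i ∧ l ≠ j} ⊕ Fin 2 | lv x < lv (genOf k)}) := by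
                rw [hcdef, h5]
                exact add_mem hα_mem hκσ_mem
              refine ⟨hmap c, hmap_adjoin _ ?_ c hc_mem, ?_⟩
              · show lv (Sum.inr 0) < lv (genOf k)
                rw [hlv_y, hlvk]
                omega
              · rw [hα_k k hki hkj, ← hcdef, hgen_k k hki hkj]
  have chain_all : ∀ a, dE (α a) = α (d a) := by
    intro a
    induction a using FreeAlgebra.induction with
    | grade0 r => rw [AlgHom.commutes, hdE1, hd1, map_zero]
    | grade1 k => exact (MAIN (k.val + 1) k (by omega)).1
    | mul a b ha hb =>
        rw [map_mul, hdE_leib, hd_leib, map_add, map_mul, map_mul, ha, hb]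
    | add a b ha hb => simp only [map_add, ha, hb]
  have pi_all : ∀ a, π (α a) = p a := by
    intro a
    induction a using FreeAlgebra.induction with
    | grade0 r => simp only [AlgHom.commutes]
    | grade1 k => exact (MAIN (k.val + 1) k (by omega)).2.1
    | mul a b ha hb => simp only [map_mul, ha, hb]
    | add a b ha hb => simp only [map_add, ha, hb]
  have hbij : Function.Bijective α := by
    set ginv : ({l : Fin n // l ≠ i ∧ l ≠ j} ⊕ Fin 2) → Fin n :=
      Sum.elim (fun v => (v : Fin n)) (fun t => if t = 1 then j else i) with hginvdef
    have hleft : ∀ k : Fin n, ginv (genOf k) = k := by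
      intro k
      by_cases hki : k = i
      · subst hki; rw [hgen_i, hginvdef]; simp
      · by_cases hkj : k = j
        · subst hkj; rw [hgen_j, hginvdef]; simp
        · rw [hgen_k k hki hkj, hginvdef]; simp
    have hright : ∀ x, genOf (ginv x) = x := by
      intro x
      rcases x with v | t
      · have h1 : ginv (Sum.inl v) = (v : Fin n) := by rw [hginvdef]; simp
        rw [h1]
        exact hgen_k v.1 v.2.1 v.2.2
      · rcases eq_or_ne t 1 with rfl | hne
        · have h1 : ginv (Sum.inr 1) = j := by rw [hginvdef]; simp
          rw [h1]
          exact hgen_j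
        · have ht : t = 0 := by
            have h2 : t.val < 2 := t.isLt
            have h3 : t.val ≠ 1 := fun h => hne (Fin.ext h)
            exact Fin.ext (by omega)
          subst ht
          have h1 : ginv (Sum.inr 0) = i := by
            rw [hginvdef]; simp
          rw [h1]
          exact hgen_i
    refine triangular_bijective ⟨genOf, ginv, hleft, hright⟩ lv α
      (fun x => Classical.choose (MAIN (x.val + 1) x (by omega)).2.2.2) ?_ ?_
    · intro x
      exact (Classical.choose_spec (MAIN (x.val + 1) x (by omega)).2.2.2).2
    · intro x
      exact (Classical.choose_spec (MAIN (x.val + 1) x (by omega)).2.2.2).1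
  set αE := AlgEquiv.ofBijective α hbij with hαEdef
  have hcoe : ∀ x, αE x = α x := fun x => rfl
  refine ⟨αE.symm, ?_, ?_, ?_, ?_, ?_⟩
  · intro e0
    have h1 : αE (d (αE.symm e0)) = dE e0 := by
      have h2 := chain_all (αE.symm e0)
      rw [hcoe, ← h2]
      have h3 : α (αE.symm e0) = e0 := by rw [← hcoe, AlgEquiv.apply_symm_apply]
      rw [h3]
    rw [← h1, AlgEquiv.symm_apply_apply]
  · have h4 : αE (FreeAlgebra.ι (ZMod 2) i)
        = FreeAlgebra.ι (ZMod 2) (Sum.inr (0 : Fin 2)) := by rw [hcoe, hα_i]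
    rw [← h4, AlgEquiv.symm_apply_apply]
  · have h5 : αE (d (FreeAlgebra.ι (ZMod 2) i))
        = FreeAlgebra.ι (ZMod 2) (Sum.inr (1 : Fin 2)) := by
      rw [hcoe, ← chain_all, hα_i, hdE_y]
    rw [← h5, AlgEquiv.symm_apply_apply]
  · intro a
    rw [AlgEquiv.symm_symm, hcoe]
    exact pi_all a
  · intro k hkY
    have h6 : αE (FreeAlgebra.ι (ZMod 2) (k : Fin n))
        = FreeAlgebra.ι (ZMod 2) (Sum.inl k) := by
      rw [hcoe]
      exact (MAIN ((k : Fin n).val + 1) k (by omega)).2.2.1 (Or.inl hkY) k.2.1 k.2.2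
    rw [← h6, AlgEquiv.symm_apply_apply]
end

section
/- Let 𝒜 be a free based DGA over ℤ/2 on generators a₁,…,a_m and let i₁: 𝒜 → ℬ₁ and f₂: 𝒜 → ℬ₂ be DGA morphisms to based DGAs ℬ₁, ℬ₂. Let 𝒟 = ℬ₁ * Â * ℬ₂ be the free ℤ/2-algebra on the disjoint union of the generators of ℬ₁, new generators â₁,…,â_m, and the generators of ℬ₂, and let ∂_𝒟 be the unique Leibniz-rule extension of the assignment taking each generator of ℬ₁ (resp. ℬ₂) to its ∂_{ℬ₁}- (resp. ∂_{ℬ₂}-) differential viewed inside 𝒟, and taking â_k to j₁(i₁(a_k)) + j₂(f₂(a_k)) + Γ(∂_𝒜 a_k), where j₁: ℬ₁ → 𝒟, j₂: ℬ₂ → 𝒟 are the subalgebra inclusions and Γ: 𝒜 → 𝒟 is the unique (j₁∘i₁, j₂∘f₂)-derivation with Γ(a_k) = â_k. Then (i) ∂_𝒟∘Γ + Γ∘∂_𝒜 = j₁∘i₁ + j₂∘f₂ as ℤ/2-linear maps 𝒜 → 𝒟, and (ii) ∂_𝒟∘∂_𝒟 = 0, so that (𝒟, ∂_𝒟) is a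 based DGA (the standard mapping cylinder DGA of i₁ and f₂). -/
/-- The standard mapping cylinder DGA `𝒟 = ℬ₁ * Â * ℬ₂` of DGA morphisms
`i₁ : 𝒜 → ℬ₁` and `f₂ : 𝒜 → ℬ₂` (with `𝒜` free on `a₁,…,a_m`) satisfies
`∂_𝒟∘Γ + Γ∘∂_𝒜 = j₁∘i₁ + j₂∘f₂` and `∂_𝒟∘∂_𝒟 = 0`.  Here the generators of `𝒟` are indexed by
`X1 ⊕ Fin m ⊕ X2`, `j₁, j₂` are the subalgebra inclusions, `Γ` is the unique
`(j₁∘i₁, j₂∘f₂)`-derivation with `Γ(a_k) = â_k := ι (inr (inl k))`, and `∂_𝒟` is the unique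
Leibniz-rule extension of the prescribed values on generators. -/
theorem mapping_cylinder_is_DGA
    (m : ℕ) (X1 X2 : Type)
    (dA : FreeAlgebra (ZMod 2) (Fin m) →ₗ[ZMod 2] FreeAlgebra (ZMod 2) (Fin m))
    (d1 : FreeAlgebra (ZMod 2) X1 →ₗ[ZMod 2] FreeAlgebra (ZMod 2) X1)
    (d2 : FreeAlgebra (ZMod 2) X2 →ₗ[ZMod 2] FreeAlgebra (ZMod 2) X2)
    (hdA_leib : ∀ a b, dA (a * b) = dA a * b + a * dA b)
    (hdA_sq : ∀ a, dA (dA a) = 0)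
    (hd1_leib : ∀ a b, d1 (a * b) = d1 a * b + a * d1 b)
    (hd1_sq : ∀ a, d1 (d1 a) = 0)
    (hd2_leib : ∀ a b, d2 (a * b) = d2 a * b + a * d2 b)
    (hd2_sq : ∀ a, d2 (d2 a) = 0)
    (i₁ : FreeAlgebra (ZMod 2) (Fin m) →ₐ[ZMod 2] FreeAlgebra (ZMod 2) X1)
    (f₂ : FreeAlgebra (ZMod 2) (Fin m) →ₐ[ZMod 2] FreeAlgebra (ZMod 2) X2)
    (hi₁ : ∀ a, d1 (i₁ a) = i₁ (dA a))
    (hf₂ : ∀ a, d2 (f₂ a) = f₂ (dA a))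
    (j₁ : FreeAlgebra (ZMod 2) X1 →ₐ[ZMod 2] FreeAlgebra (ZMod 2) (X1 ⊕ (Fin m ⊕ X2)))
    (j₂ : FreeAlgebra (ZMod 2) X2 →ₐ[ZMod 2] FreeAlgebra (ZMod 2) (X1 ⊕ (Fin m ⊕ X2)))
    (hj₁ : ∀ x : X1, j₁ (FreeAlgebra.ι (ZMod 2) x) = FreeAlgebra.ι (ZMod 2) (Sum.inl x))
    (hj₂ : ∀ x : X2, j₂ (FreeAlgebra.ι (ZMod 2) x) = FreeAlgebra.ι (ZMod 2) (Sum.inr (Sum.inr x)))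
    (Γ : FreeAlgebra (ZMod 2) (Fin m) →ₗ[ZMod 2] FreeAlgebra (ZMod 2) (X1 ⊕ (Fin m ⊕ X2)))
    (hΓ_der : ∀ a b, Γ (a * b) = Γ a * j₂ (f₂ b) + j₁ (i₁ a) * Γ b)
    (hΓ_gen : ∀ k : Fin m, Γ (FreeAlgebra.ι (ZMod 2) k) = FreeAlgebra.ι (ZMod 2) (Sum.inr (Sum.inl k)))
    (dD : FreeAlgebra (ZMod 2) (X1 ⊕ (Fin m ⊕ X2)) →ₗ[ZMod 2]
      FreeAlgebra (ZMod 2) (X1 ⊕ (Fin m ⊕ X2)))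
    (hdD_leib : ∀ a b, dD (a * b) = dD a * b + a * dD b)
    (hdD_1 : ∀ x : X1, dD (FreeAlgebra.ι (ZMod 2) (Sum.inl x)) = j₁ (d1 (FreeAlgebra.ι (ZMod 2) x)))
    (hdD_2 : ∀ x : X2, dD (FreeAlgebra.ι (ZMod 2) (Sum.inr (Sum.inr x))) =
      j₂ (d2 (FreeAlgebra.ι (ZMod 2) x)))
    (hdD_hat : ∀ k : Fin m, dD (FreeAlgebra.ι (ZMod 2) (Sum.inr (Sum.inl k))) =
      j₁ (i₁ (FreeAlgebra.ι (ZMod 2) k)) + j₂ (f₂ (FreeAlgebra.ι (ZMod 2) k)) +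
        Γ (dA (FreeAlgebra.ι (ZMod 2) k))) :
    (∀ a, dD (Γ a) + Γ (dA a) = j₁ (i₁ a) + j₂ (f₂ a)) ∧
    (∀ y, dD (dD y) = 0) := by
  classical
  -- characteristic 2
  have char2 : ∀ {Y : Type} (x : FreeAlgebra (ZMod 2) Y), x + x = 0 := by
    intro Y x
    rw [← two_smul (ZMod 2) x, show (2 : ZMod 2) = 0 by decide, zero_smul]
  have flip : ∀ {Y : Type} (x y z : FreeAlgebra (ZMod 2) Y), x + y = z → x = z + y := by
    intro Y x y z h
    rw [← h, add_assoc, char2, add_zero]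
  have cancel : ∀ {Y : Type} (x y : FreeAlgebra (ZMod 2) Y), x = x + y → y = 0 := by
    intro Y x y h
    have : x + x = x + (x + y) := by rw [← h]
    rw [char2, ← add_assoc, char2, zero_add] at this
    exact this.symm
  -- d(1) = 0 for all four differentials
  have hdA1 : dA 1 = 0 := by
    have h := hdA_leib 1 1
    simp only [mul_one, one_mul] at h
    exact cancel _ _ h
  have hd1_one : d1 1 = 0 := by
    have h := hd1_leib 1 1
    simp only [mul_one, one_mul] at h
    exact cancel _ _ h
  have hd2_one : d2 1 = 0 := by
    have h := hd2_leib 1 1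
    simp only [mul_one, one_mul] at h
    exact cancel _ _ h
  have hdD1 : dD 1 = 0 := by
    have h := hdD_leib 1 1
    simp only [mul_one, one_mul] at h
    exact cancel _ _ h
  have hΓ1 : Γ 1 = 0 := by
    have h := hΓ_der 1 1
    simp only [mul_one, one_mul, map_one] at h
    exact cancel _ _ h
  -- dD commutes with j₁ and j₂
  have dDj₁ : ∀ b, dD (j₁ b) = j₁ (d1 b) := by
    intro b
    induction b using FreeAlgebra.induction with
    | grade0 r =>
      simp [Algebra.algebraMap_eq_smul_one, map_smul, hdD1, hd1_one]
    | grade1 x => rw [hj₁ x, hdD_1 x]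
    | mul a b iha ihb =>
      rw [map_mul, hdD_leib, iha, ihb, hd1_leib, map_add, map_mul, map_mul]
    | add a b iha ihb => rw [map_add, map_add, iha, ihb, map_add, map_add]
  have dDj₂ : ∀ b, dD (j₂ b) = j₂ (d2 b) := by
    intro b
    induction b using FreeAlgebra.induction with
    | grade0 r =>
      simp [Algebra.algebraMap_eq_smul_one, map_smul, hdD1, hd2_one]
    | grade1 x => rw [hj₂ x, hdD_2 x]
    | mul a b iha ihb =>
      rw [map_mul, hdD_leib, iha, ihb, hd2_leib, map_add, map_mul, map_mul]
    | add a b iha ihb => rw [map_add, map_add, iha, ihb, map_add, map_add]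
  -- part (i)
  have part1 : ∀ a, dD (Γ a) + Γ (dA a) = j₁ (i₁ a) + j₂ (f₂ a) := by
    intro a
    induction a using FreeAlgebra.induction with
    | grade0 r =>
      simp only [Algebra.algebraMap_eq_smul_one, map_smul, hΓ1, hdA1, smul_zero,
        map_zero, map_one, add_zero, zero_add]
      exact (char2 _).symm
    | grade1 k =>
      rw [hΓ_gen, hdD_hat, add_assoc, char2, add_zero]
    | mul a b iha ihb =>
      have iha' : dD (Γ a) = j₁ (i₁ a) + j₂ (f₂ a) + Γ (dA a) := flip _ _ _ iha
      have ihb' : dD (Γ b) = j₁ (i₁ b) + j₂ (f₂ b) + Γ (dA b) := flip _ _ _ ihb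
      rw [hΓ_der, hdA_leib, map_add, map_add, hΓ_der, hΓ_der, hdD_leib, hdD_leib,
        dDj₂, dDj₁, hf₂, hi₁, iha', ihb', map_mul, map_mul, map_mul, map_mul]
      simp only [add_mul, mul_add]
      abel_nf
      simp only [two_zsmul, two_nsmul, char2, zero_add, add_zero]
    | add a b iha ihb =>
      simp only [map_add]
      rw [show dD (Γ a) + dD (Γ b) + (Γ (dA a) + Γ (dA b)) =
        (dD (Γ a) + Γ (dA a)) + (dD (Γ b) + Γ (dA b)) by abel, iha, ihb]
      abel
  refine ⟨part1, ?_⟩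
  -- part (ii)
  intro y
  induction y using FreeAlgebra.induction with
  | grade0 r =>
    simp [Algebra.algebraMap_eq_smul_one, map_smul, hdD1]
  | grade1 x =>
    rcases x with x | k | x
    · rw [hdD_1, dDj₁, hd1_sq, map_zero]
    · rw [hdD_hat]
      have hp : dD (Γ (dA (FreeAlgebra.ι (ZMod 2) k))) =
          j₁ (i₁ (dA (FreeAlgebra.ι (ZMod 2) k))) + j₂ (f₂ (dA (FreeAlgebra.ι (ZMod 2) k))) +
            Γ (dA (dA (FreeAlgebra.ι (ZMod 2) k))) := flip _ _ _ (part1 _)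
      rw [map_add, map_add, dDj₁, dDj₂, hi₁, hf₂, hp, hdA_sq, map_zero, add_zero]
      abel_nf
      simp only [two_zsmul, two_nsmul, char2, zero_add, add_zero]
    · rw [hdD_2, dDj₂, hd2_sq, map_zero]
  | mul a b iha ihb =>
    rw [hdD_leib, map_add, hdD_leib, hdD_leib, iha, ihb, zero_mul, mul_zero,
      zero_add, add_zero, char2]
  | add a b iha ihb =>
    rw [map_add, map_add, iha, ihb, add_zero]
end

section
/- Let 𝒜 be a free based DGA over ℤ/2 on generators a₁,…,a_m, let i₁: 𝒜 → ℬ₁ and f₂: 𝒜 → ℬ₂ be DGA morphisms to based DGAs, and let 𝒟 = ℬ₁ * Â * ℬ₂ be the standard mapping cylinder DGA of i₁ and f₂, with subalgebra inclusions j₁: ℬ₁ → 𝒟, j₂: ℬ₂ → 𝒟 and canonical (j₁∘i₁, j₂∘f₂)-derivation Γ: 𝒜 → 𝒟 with Γ(a_k) = â_k. Then the assignment α ↦ (α∘j₁, α∘j₂, α∘Γ) is a bijection from the set Aug(𝒟) of augmentations of 𝒟 onto the set of triples (α₁, α₂, K) in which α₁ ∈ Aug(ℬ₁), α₂ ∈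 Aug(ℬ₂), and K: 𝒜 → ℤ/2 is an (α₁∘i₁, α₂∘f₂)-derivation satisfying α₁∘i₁ + α₂∘f₂ = K∘∂_𝒜 (that is, K is a DGA homotopy from α₁∘i₁ to α₂∘f₂). -/
theorem aux_lin_alg {A B : Type*} [Semiring A] [Algebra (ZMod 2) A] [AddCommMonoid B]
    [Module (ZMod 2) B] (L : A →ₗ[ZMod 2] B) (h1 : L 1 = 0) (r : ZMod 2) :
    L ((algebraMap (ZMod 2) A) r) = 0 := by
  rw [Algebra.algebraMap_eq_smul_one, map_smul, h1, smul_zero]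

theorem zmod2_cancel {x y z : ZMod 2} (h : x + y + z = 0) : x + y = z := by
  revert x y z; decide

/-- For the standard mapping cylinder DGA `𝒟 = ℬ₁ * Â * ℬ₂` of
`i₁ : 𝒜 → ℬ₁` and `f₂ : 𝒜 → ℬ₂`, the assignment `α ↦ (α∘j₁, α∘j₂, α∘Γ)` is a bijection from
`Aug(𝒟)` onto the set of triples `(α₁, α₂, K)` with `α₁ ∈ Aug(ℬ₁)`, `α₂ ∈ Aug(ℬ₂)` and `K` an
`(α₁∘i₁, α₂∘f₂)`-derivation with `α₁∘i₁ + α₂∘f₂ = K∘∂_𝒜`.  The bijection is expressed by: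
(a) every augmentation of `𝒟` yields such a triple, and (b) every such triple arises from a
unique augmentation of `𝒟`. -/
theorem mapping_cylinder_augmentations_bijection
    (m : ℕ) (X1 X2 : Type)
    (dA : FreeAlgebra (ZMod 2) (Fin m) →ₗ[ZMod 2] FreeAlgebra (ZMod 2) (Fin m))
    (d1 : FreeAlgebra (ZMod 2) X1 →ₗ[ZMod 2] FreeAlgebra (ZMod 2) X1)
    (d2 : FreeAlgebra (ZMod 2) X2 →ₗ[ZMod 2] FreeAlgebra (ZMod 2) X2)
    (hdA_leib : ∀ a b, dA (a * b) = dA a * b + a * dA b)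
    (hdA_sq : ∀ a, dA (dA a) = 0)
    (hd1_leib : ∀ a b, d1 (a * b) = d1 a * b + a * d1 b)
    (hd1_sq : ∀ a, d1 (d1 a) = 0)
    (hd2_leib : ∀ a b, d2 (a * b) = d2 a * b + a * d2 b)
    (hd2_sq : ∀ a, d2 (d2 a) = 0)
    (i₁ : FreeAlgebra (ZMod 2) (Fin m) →ₐ[ZMod 2] FreeAlgebra (ZMod 2) X1)
    (f₂ : FreeAlgebra (ZMod 2) (Fin m) →ₐ[ZMod 2] FreeAlgebra (ZMod 2) X2)
    (hi₁ : ∀ a, d1 (i₁ a) = i₁ (dA a))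
    (hf₂ : ∀ a, d2 (f₂ a) = f₂ (dA a))
    (j₁ : FreeAlgebra (ZMod 2) X1 →ₐ[ZMod 2] FreeAlgebra (ZMod 2) (X1 ⊕ (Fin m ⊕ X2)))
    (j₂ : FreeAlgebra (ZMod 2) X2 →ₐ[ZMod 2] FreeAlgebra (ZMod 2) (X1 ⊕ (Fin m ⊕ X2)))
    (hj₁ : ∀ x : X1, j₁ (FreeAlgebra.ι (ZMod 2) x) = FreeAlgebra.ι (ZMod 2) (Sum.inl x))
    (hj₂ : ∀ x : X2, j₂ (FreeAlgebra.ι (ZMod 2) x) = FreeAlgebra.ι (ZMod 2) (Sum.inr (Sum.inr x)))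
    (Γ : FreeAlgebra (ZMod 2) (Fin m) →ₗ[ZMod 2] FreeAlgebra (ZMod 2) (X1 ⊕ (Fin m ⊕ X2)))
    (hΓ_der : ∀ a b, Γ (a * b) = Γ a * j₂ (f₂ b) + j₁ (i₁ a) * Γ b)
    (hΓ_gen : ∀ k : Fin m, Γ (FreeAlgebra.ι (ZMod 2) k) = FreeAlgebra.ι (ZMod 2) (Sum.inr (Sum.inl k)))
    (dD : FreeAlgebra (ZMod 2) (X1 ⊕ (Fin m ⊕ X2)) →ₗ[ZMod 2]
      FreeAlgebra (ZMod 2) (X1 ⊕ (Fin m ⊕ X2)))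
    (hdD_leib : ∀ a b, dD (a * b) = dD a * b + a * dD b)
    (hdD_1 : ∀ x : X1, dD (FreeAlgebra.ι (ZMod 2) (Sum.inl x)) = j₁ (d1 (FreeAlgebra.ι (ZMod 2) x)))
    (hdD_2 : ∀ x : X2, dD (FreeAlgebra.ι (ZMod 2) (Sum.inr (Sum.inr x))) =
      j₂ (d2 (FreeAlgebra.ι (ZMod 2) x)))
    (hdD_hat : ∀ k : Fin m, dD (FreeAlgebra.ι (ZMod 2) (Sum.inr (Sum.inl k))) =
      j₁ (i₁ (FreeAlgebra.ι (ZMod 2) k)) + j₂ (f₂ (FreeAlgebra.ι (ZMod 2) k)) +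
        Γ (dA (FreeAlgebra.ι (ZMod 2) k))) :
    (∀ ε : FreeAlgebra (ZMod 2) (X1 ⊕ (Fin m ⊕ X2)) →ₐ[ZMod 2] ZMod 2,
      (∀ y, ε (dD y) = 0) →
        (∀ b, ε (j₁ (d1 b)) = 0) ∧
        (∀ b, ε (j₂ (d2 b)) = 0) ∧
        (∀ a b, ε (Γ (a * b)) = ε (Γ a) * ε (j₂ (f₂ b)) + ε (j₁ (i₁ a)) * ε (Γ b)) ∧
        (∀ a, ε (j₁ (i₁ a)) + ε (j₂ (f₂ a)) = ε (Γ (dA a)))) ∧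
    (∀ (α₁ : FreeAlgebra (ZMod 2) X1 →ₐ[ZMod 2] ZMod 2)
       (α₂ : FreeAlgebra (ZMod 2) X2 →ₐ[ZMod 2] ZMod 2)
       (K : FreeAlgebra (ZMod 2) (Fin m) →ₗ[ZMod 2] ZMod 2),
      (∀ b, α₁ (d1 b) = 0) → (∀ b, α₂ (d2 b) = 0) →
      (∀ a b, K (a * b) = K a * α₂ (f₂ b) + α₁ (i₁ a) * K b) →
      (∀ a, α₁ (i₁ a) + α₂ (f₂ a) = K (dA a)) →
      ∃! ε : FreeAlgebra (ZMod 2) (X1 ⊕ (Fin m ⊕ X2)) →ₐ[ZMod 2] ZMod 2,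
        (∀ y, ε (dD y) = 0) ∧
        (∀ b, ε (j₁ b) = α₁ b) ∧ (∀ b, ε (j₂ b) = α₂ b) ∧ (∀ a, ε (Γ a) = K a)) := by
  
  have h2z : ∀ z : ZMod 2, z + z = 0 := by decide
  have hdA1 : dA 1 = 0 := by
    have h := hdA_leib 1 1; simp only [one_mul, mul_one] at h; exact left_eq_add.mp h
  have hd1_one : d1 1 = 0 := by
    have h := hd1_leib 1 1; simp only [one_mul, mul_one] at h; exact left_eq_add.mp h
  have hd2_one : d2 1 = 0 := by
    have h := hd2_leib 1 1; simp only [one_mul, mul_one] at h; exact left_eq_add.mp h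
  have hdD1 : dD 1 = 0 := by
    have h := hdD_leib 1 1; simp only [one_mul, mul_one] at h; exact left_eq_add.mp h
  have hΓ1 : Γ 1 = 0 := by
    have h := hΓ_der 1 1
    simp only [map_one, one_mul, mul_one] at h
    exact left_eq_add.mp h
  have hdDj₁ : ∀ b, dD (j₁ b) = j₁ (d1 b) := by
    intro b
    induction b using FreeAlgebra.induction with
    | grade0 r =>
        rw [AlgHom.commutes, aux_lin_alg dD hdD1, aux_lin_alg d1 hd1_one, map_zero]
    | grade1 x => rw [hj₁, hdD_1]
    | mul a b ha hb =>
        rw [map_mul, hdD_leib, ha, hb, hd1_leib, map_add, map_mul, map_mul]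
    | add a b ha hb => simp only [map_add, ha, hb]
  have hdDj₂ : ∀ b, dD (j₂ b) = j₂ (d2 b) := by
    intro b
    induction b using FreeAlgebra.induction with
    | grade0 r =>
        rw [AlgHom.commutes, aux_lin_alg dD hdD1, aux_lin_alg d2 hd2_one, map_zero]
    | grade1 x => rw [hj₂, hdD_2]
    | mul a b ha hb =>
        rw [map_mul, hdD_leib, ha, hb, hd2_leib, map_add, map_mul, map_mul]
    | add a b ha hb => simp only [map_add, ha, hb]
  constructor
  · intro ε hε
    refine ⟨?_, ?_, ?_, ?_⟩
    · intro b; rw [← hdDj₁]; exact hε _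
    · intro b; rw [← hdDj₂]; exact hε _
    · intro a b; rw [hΓ_der, map_add, map_mul, map_mul]
    · have key : ∀ a, ε (dD (Γ a)) =
          ε (j₁ (i₁ a)) + ε (j₂ (f₂ a)) + ε (Γ (dA a)) := by
        intro a
        induction a using FreeAlgebra.induction with
        | grade0 r =>
            simp [aux_lin_alg Γ hΓ1, aux_lin_alg dA hdA1, h2z]
        | grade1 k => rw [hΓ_gen, hdD_hat, map_add, map_add]
        | mul a b iha ihb =>
            simp only [hΓ_der, hdA_leib, map_add, map_mul, hdD_leib, hdDj₁, hdDj₂,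
              hf₂, hi₁, iha, ihb]
            generalize ε (j₁ (i₁ a)) = p1
            generalize ε (j₂ (f₂ a)) = p2
            generalize ε (Γ a) = p3
            generalize ε (Γ (dA a)) = p4
            generalize ε (j₁ (i₁ (dA a))) = p5
            generalize ε (j₁ (i₁ b)) = q1
            generalize ε (j₂ (f₂ b)) = q2
            generalize ε (Γ b) = q3
            generalize ε (Γ (dA b)) = q4
            generalize ε (j₂ (f₂ (dA b))) = q5
            revert p1 p2 p3 p4 p5 q1 q2 q3 q4 q5
            decide
        | add a b iha ihb =>
            simp only [map_add, iha, ihb]; abel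
      intro a
      have h : ε (j₁ (i₁ a)) + ε (j₂ (f₂ a)) + ε (Γ (dA a)) = 0 := by
        rw [← key a]; exact hε _
      exact zmod2_cancel h
  · intro α₁ α₂ K hα₁ hα₂ hKder hKhom
    have hK1 : K 1 = 0 := by
      have h := hKder 1 1
      simp only [map_one, one_mul, mul_one] at h
      exact left_eq_add.mp h
    set g : X1 ⊕ (Fin m ⊕ X2) → ZMod 2 :=
      Sum.elim (fun x => α₁ (FreeAlgebra.ι (ZMod 2) x))
        (Sum.elim (fun k => K (FreeAlgebra.ι (ZMod 2) k))
          (fun x => α₂ (FreeAlgebra.ι (ZMod 2) x))) with hg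
    set ε : FreeAlgebra (ZMod 2) (X1 ⊕ (Fin m ⊕ X2)) →ₐ[ZMod 2] ZMod 2 :=
      FreeAlgebra.lift (ZMod 2) g with hεdef
    have hει : ∀ v, ε (FreeAlgebra.ι (ZMod 2) v) = g v := fun v => by
      rw [hεdef]; exact FreeAlgebra.lift_ι_apply g v
    have hεj₁ : ∀ b, ε (j₁ b) = α₁ b := by
      intro b
      induction b using FreeAlgebra.induction with
      | grade0 r => rw [AlgHom.commutes, AlgHom.commutes, AlgHom.commutes]
      | grade1 x => rw [hj₁, hει]; rfl
      | mul a b ha hb => rw [map_mul, map_mul, map_mul, ha, hb]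
      | add a b ha hb => rw [map_add, map_add, map_add, ha, hb]
    have hεj₂ : ∀ b, ε (j₂ b) = α₂ b := by
      intro b
      induction b using FreeAlgebra.induction with
      | grade0 r => rw [AlgHom.commutes, AlgHom.commutes, AlgHom.commutes]
      | grade1 x => rw [hj₂, hει]; rfl
      | mul a b ha hb => rw [map_mul, map_mul, map_mul, ha, hb]
      | add a b ha hb => rw [map_add, map_add, map_add, ha, hb]
    have hεΓ : ∀ a, ε (Γ a) = K a := by
      intro a
      induction a using FreeAlgebra.induction with
      | grade0 r => rw [aux_lin_alg Γ hΓ1, aux_lin_alg K hK1, map_zero]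
      | grade1 k => rw [hΓ_gen, hει]; rfl
      | mul a b iha ihb =>
          rw [hΓ_der, map_add, map_mul, map_mul, iha, ihb, hεj₂, hεj₁, hKder]
      | add a b iha ihb => rw [map_add, map_add, map_add, iha, ihb]
    have hεdD : ∀ y, ε (dD y) = 0 := by
      intro y
      induction y using FreeAlgebra.induction with
      | grade0 r => rw [aux_lin_alg dD hdD1, map_zero]
      | grade1 v =>
          rcases v with x | k | x
          · rw [hdD_1, hεj₁, hα₁]
          · rw [hdD_hat, map_add, map_add, hεj₁, hεj₂, hεΓ, hKhom]
            exact h2z _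
          · rw [hdD_2, hεj₂, hα₂]
      | mul a b iha ihb =>
          rw [hdD_leib, map_add, map_mul, map_mul, iha, ihb, zero_mul, mul_zero, add_zero]
      | add a b iha ihb => rw [map_add, map_add, iha, ihb, add_zero]
    refine ⟨ε, ⟨hεdD, hεj₁, hεj₂, hεΓ⟩, ?_⟩
    rintro ε' ⟨_, h'1, h'2, h'3⟩
    apply FreeAlgebra.hom_ext
    funext v
    simp only [Function.comp_apply]
    rcases v with x | k | x
    · rw [← hj₁ x, h'1, hεj₁]
    · rw [← hΓ_gen k, h'3, hεΓ]
    · rw [← hj₂ x, h'2, hεj₂]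
end

section
/- Let 𝒜 be a free based DGA over ℤ/2 on generators a₁,…,a_m and let Cyl(𝒜) = 𝒜 * Â * 𝒜 be the standard mapping cylinder DGA of the two identity morphisms id: 𝒜 → 𝒜 (i.e. ℬ₁ = ℬ₂ = 𝒜 and i₁ = f₂ = id), with j₁, j₂: 𝒜 → Cyl(𝒜) the inclusions of the two copies of 𝒜. Then two augmentations ε₀, ε₁ of 𝒜 are DGA homotopic if and only if there exists an augmentation α of Cyl(𝒜) with α∘j₁ = ε₀ and α∘j₂ = ε₁. -/
open FreeAlgebra

/-- Two `(f,g)`-derivations on a free algebra over `ZMod 2` that agree on generators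
are equal. -/
lemma der_ext {σ : Type*} {B : Type*} [Ring B] [Algebra (ZMod 2) B]
    (f g : FreeAlgebra (ZMod 2) σ →ₐ[ZMod 2] B)
    (D E : FreeAlgebra (ZMod 2) σ →ₗ[ZMod 2] B)
    (hD : ∀ a b, D (a * b) = D a * g b + f a * D b)
    (hE : ∀ a b, E (a * b) = E a * g b + f a * E b)
    (hgen : ∀ i, D (FreeAlgebra.ι (ZMod 2) i) = E (FreeAlgebra.ι (ZMod 2) i)) :
    ∀ x, D x = E x := by
  have key : ∀ (D' : FreeAlgebra (ZMod 2) σ →ₗ[ZMod 2] B),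
      (∀ a b, D' (a * b) = D' a * g b + f a * D' b) → D' 1 = 0 := by
    intro D' hD'
    have h := hD' 1 1
    simp only [one_mul, mul_one, map_one] at h
    exact (left_eq_add.mp h)
  intro x
  induction x with
  | grade0 r =>
      rw [Algebra.algebraMap_eq_smul_one, map_smul, map_smul, key D hD, key E hE]
  | grade1 i => exact hgen i
  | mul a b ha hb => rw [hD, hE, ha, hb]
  | add a b ha hb => rw [map_add, map_add, ha, hb]

/-- A differential (Leibniz linear map) on a free algebra over `ZMod 2` vanishes on
scalars. -/
lemma diff_one {σ : Type*} {B : Type*} [Ring B] [Algebra (ZMod 2) B]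
    (f : FreeAlgebra (ZMod 2) σ →ₐ[ZMod 2] B)
    (D : FreeAlgebra (ZMod 2) σ →ₗ[ZMod 2] B)
    (hD : ∀ a b, D (a * b) = D a * f b + f a * D b) :
    D 1 = 0 := by
  have h := hD 1 1
  simp only [one_mul, mul_one, map_one] at h
  exact (left_eq_add.mp h)

/-- For the standard mapping cylinder `Cyl(𝒜) = 𝒜 * Â * 𝒜` of the two
identity morphisms of a free based DGA `𝒜` over `ℤ/2` (generators of `Cyl(𝒜)` indexed by
`Fin m ⊕ Fin m ⊕ Fin m`, with `j₁, j₂` the inclusions of the two outer copies of `𝒜`),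
two augmentations `ε₀, ε₁` of `𝒜` are DGA homotopic if and only if there is an augmentation
`α` of `Cyl(𝒜)` with `α∘j₁ = ε₀` and `α∘j₂ = ε₁`. -/
theorem homotopic_augmentations_iff_cylinder_augmentation
    (m : ℕ)
    (dA : FreeAlgebra (ZMod 2) (Fin m) →ₗ[ZMod 2] FreeAlgebra (ZMod 2) (Fin m))
    (hdA_leib : ∀ a b, dA (a * b) = dA a * b + a * dA b)
    (hdA_sq : ∀ a, dA (dA a) = 0)
    (j₁ j₂ : FreeAlgebra (ZMod 2) (Fin m) →ₐ[ZMod 2]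
      FreeAlgebra (ZMod 2) (Fin m ⊕ (Fin m ⊕ Fin m)))
    (hj₁ : ∀ k : Fin m, j₁ (FreeAlgebra.ι (ZMod 2) k) = FreeAlgebra.ι (ZMod 2) (Sum.inl k))
    (hj₂ : ∀ k : Fin m, j₂ (FreeAlgebra.ι (ZMod 2) k) =
      FreeAlgebra.ι (ZMod 2) (Sum.inr (Sum.inr k)))
    (Γ : FreeAlgebra (ZMod 2) (Fin m) →ₗ[ZMod 2]
      FreeAlgebra (ZMod 2) (Fin m ⊕ (Fin m ⊕ Fin m)))
    (hΓ_der : ∀ a b, Γ (a * b) = Γ a * j₂ b + j₁ a * Γ b)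
    (hΓ_gen : ∀ k : Fin m, Γ (FreeAlgebra.ι (ZMod 2) k) =
      FreeAlgebra.ι (ZMod 2) (Sum.inr (Sum.inl k)))
    (dC : FreeAlgebra (ZMod 2) (Fin m ⊕ (Fin m ⊕ Fin m)) →ₗ[ZMod 2]
      FreeAlgebra (ZMod 2) (Fin m ⊕ (Fin m ⊕ Fin m)))
    (hdC_leib : ∀ a b, dC (a * b) = dC a * b + a * dC b)
    (hdC_1 : ∀ k : Fin m, dC (FreeAlgebra.ι (ZMod 2) (Sum.inl k)) =
      j₁ (dA (FreeAlgebra.ι (ZMod 2) k)))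
    (hdC_2 : ∀ k : Fin m, dC (FreeAlgebra.ι (ZMod 2) (Sum.inr (Sum.inr k))) =
      j₂ (dA (FreeAlgebra.ι (ZMod 2) k)))
    (hdC_hat : ∀ k : Fin m, dC (FreeAlgebra.ι (ZMod 2) (Sum.inr (Sum.inl k))) =
      j₁ (FreeAlgebra.ι (ZMod 2) k) + j₂ (FreeAlgebra.ι (ZMod 2) k) +
        Γ (dA (FreeAlgebra.ι (ZMod 2) k)))
    (ε₀ ε₁ : FreeAlgebra (ZMod 2) (Fin m) →ₐ[ZMod 2] ZMod 2)
    (hε₀ : ∀ a, ε₀ (dA a) = 0) (hε₁ : ∀ a, ε₁ (dA a) = 0) :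
    (∃ K : FreeAlgebra (ZMod 2) (Fin m) →ₗ[ZMod 2] ZMod 2,
      (∀ a b, K (a * b) = K a * ε₁ b + ε₀ a * K b) ∧
      (∀ a, ε₀ a + ε₁ a = K (dA a))) ↔
    (∃ α : FreeAlgebra (ZMod 2) (Fin m ⊕ (Fin m ⊕ Fin m)) →ₐ[ZMod 2] ZMod 2,
      (∀ y, α (dC y) = 0) ∧ (∀ a, α (j₁ a) = ε₀ a) ∧ (∀ a, α (j₂ a) = ε₁ a)) := by
  have haa : ∀ x : ZMod 2, x + x = 0 := by decide
  constructor
  · rintro ⟨K, hK_der, hK_hom⟩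
    -- define α on generators
    set α : FreeAlgebra (ZMod 2) (Fin m ⊕ (Fin m ⊕ Fin m)) →ₐ[ZMod 2] ZMod 2 :=
      FreeAlgebra.lift (ZMod 2) (fun s => match s with
        | Sum.inl k => ε₀ (FreeAlgebra.ι (ZMod 2) k)
        | Sum.inr (Sum.inl k) => K (FreeAlgebra.ι (ZMod 2) k)
        | Sum.inr (Sum.inr k) => ε₁ (FreeAlgebra.ι (ZMod 2) k)) with hα
    have hα₁ : ∀ a, α (j₁ a) = ε₀ a := by
      have : α.comp j₁ = ε₀ := by
        apply FreeAlgebra.hom_ext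
        funext k
        simp [hα, hj₁ k]
      intro a; exact congrArg (fun f => f a) this
    have hα₂ : ∀ a, α (j₂ a) = ε₁ a := by
      have : α.comp j₂ = ε₁ := by
        apply FreeAlgebra.hom_ext
        funext k
        simp [hα, hj₂ k]
      intro a; exact congrArg (fun f => f a) this
    have hαΓ : ∀ a, α (Γ a) = K a := by
      apply der_ext ε₀ ε₁ (α.toLinearMap ∘ₗ Γ) K
      · intro a b
        simp only [LinearMap.comp_apply, AlgHom.toLinearMap_apply, hΓ_der, map_add, map_mul,
          hα₁, hα₂]
      · exact hK_der
      · intro k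
        simp [hΓ_gen k, hα]
    refine ⟨α, ?_, hα₁, hα₂⟩
    intro y
    induction y with
    | grade0 r =>
        rw [Algebra.algebraMap_eq_smul_one, map_smul,
          diff_one (AlgHom.id _ _) dC hdC_leib, smul_zero, map_zero]
    | grade1 i =>
        rcases i with k | k | k
        · rw [hdC_1 k, hα₁, hε₀]
        · rw [hdC_hat k, map_add, map_add, hα₁, hα₂, hαΓ, ← hK_hom]
          linear_combination haa (ε₀ (FreeAlgebra.ι (ZMod 2) k)) +
            haa (ε₁ (FreeAlgebra.ι (ZMod 2) k))
        · rw [hdC_2 k, hα₂, hε₁]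
    | mul a b ha hb =>
        rw [hdC_leib, map_add, map_mul, map_mul, ha, hb, zero_mul, mul_zero, add_zero]
    | add a b ha hb => rw [map_add, map_add, ha, hb, add_zero]
  · rintro ⟨α, hαdC, hα₁, hα₂⟩
    set K : FreeAlgebra (ZMod 2) (Fin m) →ₗ[ZMod 2] ZMod 2 :=
      α.toLinearMap ∘ₗ Γ with hKdef
    have hK_der : ∀ a b, K (a * b) = K a * ε₁ b + ε₀ a * K b := by
      intro a b
      simp only [hKdef, LinearMap.comp_apply, AlgHom.toLinearMap_apply, hΓ_der, map_add,
        map_mul, hα₁, hα₂]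
    have hdCj₁ : ∀ a, dC (j₁ a) = j₁ (dA a) := by
      apply der_ext j₁ j₁ (dC ∘ₗ j₁.toLinearMap) (j₁.toLinearMap ∘ₗ dA)
      · intro a b
        simp only [LinearMap.comp_apply, AlgHom.toLinearMap_apply, map_mul, hdC_leib]
      · intro a b
        simp only [LinearMap.comp_apply, AlgHom.toLinearMap_apply, hdA_leib, map_add, map_mul]
      · intro k
        simp only [LinearMap.comp_apply, AlgHom.toLinearMap_apply, hj₁ k, hdC_1 k]
    have hdCj₂ : ∀ a, dC (j₂ a) = j₂ (dA a) := by
      apply der_ext j₂ j₂ (dC ∘ₗ j₂.toLinearMap) (j₂.toLinearMap ∘ₗ dA)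
      · intro a b
        simp only [LinearMap.comp_apply, AlgHom.toLinearMap_apply, map_mul, hdC_leib]
      · intro a b
        simp only [LinearMap.comp_apply, AlgHom.toLinearMap_apply, hdA_leib, map_add, map_mul]
      · intro k
        simp only [LinearMap.comp_apply, AlgHom.toLinearMap_apply, hj₂ k, hdC_2 k]
    have hε₀d : ∀ a, ε₀ (dA a) = 0 := by
      intro a; rw [← hα₁, ← hdCj₁, hαdC]
    have hε₁d : ∀ a, ε₁ (dA a) = 0 := by
      intro a; rw [← hα₂, ← hdCj₂, hαdC]
    refine ⟨K, hK_der, ?_⟩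
    intro a
    induction a with
    | grade0 r =>
        have hdA1 : dA (algebraMap (ZMod 2) _ r) = 0 := by
          rw [Algebra.algebraMap_eq_smul_one, map_smul,
            diff_one (AlgHom.id _ _) dA hdA_leib, smul_zero]
        rw [hdA1, map_zero, AlgHom.commutes, AlgHom.commutes, haa]
    | grade1 k =>
        have h := hαdC (FreeAlgebra.ι (ZMod 2) (Sum.inr (Sum.inl k)))
        rw [hdC_hat k, map_add, map_add, hα₁, hα₂] at h
        have : K (dA (FreeAlgebra.ι (ZMod 2) k))
            = α (Γ (dA (FreeAlgebra.ι (ZMod 2) k))) := rfl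
        rw [this]
        linear_combination h - haa (α (Γ (dA (FreeAlgebra.ι (ZMod 2) k))))
    | mul a b ha hb =>
        rw [hdA_leib, map_add, hK_der, hK_der, hε₀d, hε₁d, ← ha, ← hb, map_mul, map_mul]
        linear_combination - haa (ε₀ a * ε₁ b)
    | add a b ha hb =>
        rw [map_add, map_add, map_add, map_add, ← ha, ← hb]
        ring
end

section
/- Let M = (𝒜₁ →f ℬ ←i 𝒜₂) and M' = (𝒜₁ →f' ℬ' ←i' 𝒜₂) be immersed DGA maps between triangular based DGAs over ℤ/2, and suppose there exist stabilizations ℬ*S and ℬ'*S' together with a DGA isomorphism φ: ℬ*S → ℬ'*S' such that φ∘ι∘i = ι'∘i' and φ∘ι∘f is DGA homotopic to ι'∘f', where ι: ℬ → ℬ*S and ι': ℬ' → ℬ'*S' are the inclusions. Let h = π'∘φ∘ι: ℬ → ℬ', where π': ℬ'*S' → ℬ' is the projection of the stabilization. Then h∘i = i' and h∘f is DGA homotopic to f'; the induced map h*: Aug(ℬ')/≈ → Aug(ℬ)/≈, [α] ↦ [α∘h], is a well-defined bijection satisfying [α∘i'] = [(α∘h)∘i] and [α∘f'] = [(α∘h)∘f]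 for every augmentation α of ℬ'; and consequently the induced augmentation sets satisfy I(M) = I(M'). -/
noncomputable section




namespace DGAAux

open FreeAlgebra

theorem add_self_zero {M : Type*} [AddCommMonoid M] [Module (ZMod 2) M] (a : M) :
    a + a = 0 := by
  have h : (2 : ZMod 2) • a = a + a := two_smul (ZMod 2) a
  have h2 : (2 : ZMod 2) = 0 := rfl
  rw [h2, zero_smul] at h
  exact h.symm

variable {X Y Z W : Type} {A B : Type*} [Semiring A] [Algebra (ZMod 2) A]
  [Semiring B] [Algebra (ZMod 2) B]

theorem der_one (f g : FreeAlgebra (ZMod 2) X →ₐ[ZMod 2] A)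
    (K : FreeAlgebra (ZMod 2) X →ₗ[ZMod 2] A)
    (hK : ∀ a b, K (a * b) = K a * g b + f a * K b) : K 1 = 0 := by
  have := hK 1 1
  simp only [mul_one, map_one, one_mul] at this
  have h2 := add_self_zero (K (1 : FreeAlgebra (ZMod 2) X))
  rw [this]
  exact h2

theorem der_ext (f g : FreeAlgebra (ZMod 2) X →ₐ[ZMod 2] A)
    (K₁ K₂ : FreeAlgebra (ZMod 2) X →ₗ[ZMod 2] A)
    (h₁ : ∀ a b, K₁ (a * b) = K₁ a * g b + f a * K₁ b)
    (h₂ : ∀ a b, K₂ (a * b) = K₂ a * g b + f a * K₂ b)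
    (hgen : ∀ x, K₁ (ι (ZMod 2) x) = K₂ (ι (ZMod 2) x)) :
    ∀ a, K₁ a = K₂ a := by
  intro a
  induction a using FreeAlgebra.induction with
  | grade0 r =>
    rw [Algebra.algebraMap_eq_smul_one, map_smul, map_smul,
      der_one f g K₁ h₁, der_one f g K₂ h₂]
  | grade1 x => exact hgen x
  | mul a b ha hb => rw [h₁, h₂, ha, hb]
  | add a b ha hb => rw [map_add, map_add, ha, hb]

theorem der_mk (f g : FreeAlgebra (ZMod 2) X →ₐ[ZMod 2] A) (k₀ : X → A) :
    ∃ K : FreeAlgebra (ZMod 2) X →ₗ[ZMod 2] A,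
      (∀ a b, K (a * b) = K a * g b + f a * K b) ∧
      (∀ x, K (ι (ZMod 2) x) = k₀ x) := by
  classical
  let Ψ : FreeAlgebra (ZMod 2) X →ₐ[ZMod 2] Matrix (Fin 2) (Fin 2) A :=
    FreeAlgebra.lift (ZMod 2)
      (fun x => Matrix.of ![![f (ι (ZMod 2) x), k₀ x], ![0, g (ι (ZMod 2) x)]])
  have hP : ∀ a, Ψ a 0 0 = f a ∧ Ψ a 1 1 = g a ∧ Ψ a 1 0 = 0 := by
    intro a
    induction a using FreeAlgebra.induction with
    | grade0 r =>
      simp [Algebra.algebraMap_eq_smul_one, Matrix.smul_apply, Matrix.one_apply]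
    | grade1 x =>
      simp [Ψ, FreeAlgebra.lift_ι_apply]
    | mul a b ha hb =>
      obtain ⟨ha1, ha2, ha3⟩ := ha
      obtain ⟨hb1, hb2, hb3⟩ := hb
      refine ⟨?_, ?_, ?_⟩ <;>
        simp [map_mul, Matrix.mul_apply, Fin.sum_univ_two, ha1, ha2, ha3, hb1, hb2, hb3]
    | add a b ha hb =>
      obtain ⟨ha1, ha2, ha3⟩ := ha
      obtain ⟨hb1, hb2, hb3⟩ := hb
      refine ⟨?_, ?_, ?_⟩ <;>
        simp [map_add, Matrix.add_apply, ha1, ha2, ha3, hb1, hb2, hb3]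
  refine ⟨{ toFun := fun a => Ψ a 0 1,
            map_add' := by intro a b; simp [map_add, Matrix.add_apply]
            map_smul' := by intro c a; simp [map_smul, Matrix.smul_apply] }, ?_, ?_⟩
  · intro a b
    have ha' := hP a
    have hb' := hP b
    simp only [LinearMap.coe_mk, AddHom.coe_mk, map_mul]
    rw [Matrix.mul_apply, Fin.sum_univ_two, ha'.1, hb'.2.1]
    exact add_comm _ _
  · intro x
    simp [Ψ, FreeAlgebra.lift_ι_apply]

theorem alg_ext (f g : FreeAlgebra (ZMod 2) X →ₐ[ZMod 2] A)
    (hgen : ∀ x, f (ι (ZMod 2) x) = g (ι (ZMod 2) x)) : ∀ a, f a = g a := by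
  have : f = g := FreeAlgebra.hom_ext (funext fun x => hgen x)
  intro a; rw [this]

theorem hom_d_comm
    (dX : FreeAlgebra (ZMod 2) X →ₗ[ZMod 2] FreeAlgebra (ZMod 2) X)
    (dY : FreeAlgebra (ZMod 2) Y →ₗ[ZMod 2] FreeAlgebra (ZMod 2) Y)
    (hdX : ∀ a b, dX (a * b) = dX a * b + a * dX b)
    (hdY : ∀ a b, dY (a * b) = dY a * b + a * dY b)
    (w : FreeAlgebra (ZMod 2) X →ₐ[ZMod 2] FreeAlgebra (ZMod 2) Y)
    (hgen : ∀ x, w (dX (ι (ZMod 2) x)) = dY (w (ι (ZMod 2) x))) :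
    ∀ a, w (dX a) = dY (w a) := by
  have := der_ext w w (w.toLinearMap.comp dX) (dY.comp w.toLinearMap)
    (fun a b => by simp [hdX a b, map_add, map_mul])
    (fun a b => by simp [map_mul, hdY (w a) (w b)])
    (fun x => hgen x)
  intro a; exact this a

/-- A DGA homotopy between maps `p q` out of a free algebra. -/
def Htpy (dX : FreeAlgebra (ZMod 2) X →ₗ[ZMod 2] FreeAlgebra (ZMod 2) X)
    (dA : A →ₗ[ZMod 2] A) (p q : FreeAlgebra (ZMod 2) X → A) : Prop :=
  ∃ K : FreeAlgebra (ZMod 2) X →ₗ[ZMod 2] A,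
    (∀ a b, K (a * b) = K a * q b + p a * K b) ∧
    (∀ a, p a + q a = dA (K a) + K (dX a))

theorem Htpy.congr {dX : FreeAlgebra (ZMod 2) X →ₗ[ZMod 2] FreeAlgebra (ZMod 2) X}
    {dA : A →ₗ[ZMod 2] A} {p q p' q' : FreeAlgebra (ZMod 2) X → A}
    (hp : ∀ a, p a = p' a) (hq : ∀ a, q a = q' a) (h : Htpy dX dA p q) :
    Htpy dX dA p' q' := by
  obtain ⟨K, hK1, hK2⟩ := h
  exact ⟨K, fun a b => by rw [hK1, hp, hq], fun a => by rw [← hp, ← hq, hK2]⟩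

theorem Htpy.compLeft {dX : FreeAlgebra (ZMod 2) X →ₗ[ZMod 2] FreeAlgebra (ZMod 2) X}
    {dA : A →ₗ[ZMod 2] A} {dB : B →ₗ[ZMod 2] B} {p q : FreeAlgebra (ZMod 2) X → A}
    (w : A →ₐ[ZMod 2] B) (hw : ∀ y, w (dA y) = dB (w y)) (h : Htpy dX dA p q) :
    Htpy dX dB (fun a => w (p a)) (fun a => w (q a)) := by
  obtain ⟨K, hK1, hK2⟩ := h
  refine ⟨w.toLinearMap.comp K, fun a b => ?_, fun a => ?_⟩
  · simp only [LinearMap.comp_apply, AlgHom.toLinearMap_apply, hK1, map_add, map_mul]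
  · simp only [LinearMap.comp_apply, AlgHom.toLinearMap_apply]
    rw [← map_add, hK2 a, map_add, hw]

theorem Htpy.compRight {dW : FreeAlgebra (ZMod 2) W →ₗ[ZMod 2] FreeAlgebra (ZMod 2) W}
    {dX : FreeAlgebra (ZMod 2) X →ₗ[ZMod 2] FreeAlgebra (ZMod 2) X}
    {dA : A →ₗ[ZMod 2] A} {p q : FreeAlgebra (ZMod 2) X → A}
    (u : FreeAlgebra (ZMod 2) W →ₐ[ZMod 2] FreeAlgebra (ZMod 2) X)
    (hu : ∀ a, dX (u a) = u (dW a)) (h : Htpy dX dA p q) :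
    Htpy dW dA (fun a => p (u a)) (fun a => q (u a)) := by
  obtain ⟨K, hK1, hK2⟩ := h
  refine ⟨K.comp u.toLinearMap, fun a b => ?_, fun a => ?_⟩
  · simp only [LinearMap.comp_apply, AlgHom.toLinearMap_apply, map_mul, hK1]
  · simp only [LinearMap.comp_apply, AlgHom.toLinearMap_apply]
    rw [hK2 (u a), ← hu]


/-- The stabilization homotopy: `id ≃ ι∘π` on a stabilization. -/
theorem stab_htpy {X S : Type}
    (dX : FreeAlgebra (ZMod 2) X →ₗ[ZMod 2] FreeAlgebra (ZMod 2) X)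
    (hdX : ∀ a b, dX (a * b) = dX a * b + a * dX b)
    (ιS : FreeAlgebra (ZMod 2) X →ₐ[ZMod 2] FreeAlgebra (ZMod 2) (X ⊕ (S ⊕ S)))
    (hιS : ∀ x, ιS (ι (ZMod 2) x) = ι (ZMod 2) (Sum.inl x))
    (dS : FreeAlgebra (ZMod 2) (X ⊕ (S ⊕ S)) →ₗ[ZMod 2] FreeAlgebra (ZMod 2) (X ⊕ (S ⊕ S)))
    (hdS : ∀ a b, dS (a * b) = dS a * b + a * dS b)
    (hgenS : ∀ x, dS (ι (ZMod 2) (Sum.inl x)) = ιS (dX (ι (ZMod 2) x)))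
    (hA : ∀ s : S, dS (ι (ZMod 2) (Sum.inr (Sum.inl s))) = ι (ZMod 2) (Sum.inr (Sum.inr s)))
    (hB : ∀ s : S, dS (ι (ZMod 2) (Sum.inr (Sum.inr s))) = 0)
    (πS : FreeAlgebra (ZMod 2) (X ⊕ (S ⊕ S)) →ₐ[ZMod 2] FreeAlgebra (ZMod 2) X)
    (hπ_gen : ∀ x, πS (ι (ZMod 2) (Sum.inl x)) = ι (ZMod 2) x)
    (hπ_S : ∀ s : S ⊕ S, πS (ι (ZMod 2) (Sum.inr s)) = 0) :
    Htpy dS dS (fun y => y) (fun y => ιS (πS y)) := by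
  -- π ∘ ι = id
  have hπι : ∀ b, πS (ιS b) = b := by
    have := alg_ext (πS.comp ιS) (AlgHom.id (ZMod 2) _)
      (fun x => by simp [hιS, hπ_gen])
    intro b; simpa using this b
  -- dS ∘ ιS = ιS ∘ dX
  have hdι : ∀ b, ιS (dX b) = dS (ιS b) :=
    hom_d_comm dX dS hdX hdS ιS (fun x => by rw [hιS, hgenS])
  -- πS ∘ dS = dX ∘ πS
  have hπd : ∀ y, πS (dS y) = dX (πS y) := by
    refine hom_d_comm dS dX hdS hdX πS (fun z => ?_)
    rcases z with x | (s | s)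
    · rw [hgenS, hπι, hπ_gen]
    · rw [hA, hπ_S, hπ_S, map_zero]
    · rw [hB, hπ_S, map_zero, map_zero]
  have hιπd : ∀ y, ιS (πS (dS y)) = dS (ιS (πS y)) := fun y => by
    rw [hπd, hdι]
  obtain ⟨K, hKmul, hKgen⟩ := der_mk (AlgHom.id (ZMod 2) _) (ιS.comp πS)
    (Sum.elim (fun _ => 0)
      (Sum.elim (fun _ => 0) (fun s => ι (ZMod 2) (Sum.inr (Sum.inl s)))))
  simp only [AlgHom.coe_id, id_eq, AlgHom.coe_comp, Function.comp_apply] at hKmul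
  -- K vanishes on the image of ιS
  have hK0 : ∀ b, K (ιS b) = 0 := by
    have := der_ext ιS ((ιS.comp πS).comp ιS) (K.comp ιS.toLinearMap) 0
      (fun a b => by
        simp only [LinearMap.comp_apply, AlgHom.toLinearMap_apply, map_mul, hKmul,
          AlgHom.coe_comp, Function.comp_apply])
      (fun a b => by simp)
      (fun x => by
        simp only [LinearMap.comp_apply, AlgHom.toLinearMap_apply, hιS,
          LinearMap.zero_apply]
        rw [hKgen]; rfl)
    intro b; simpa using this b
  -- the homotopy identity, by derivation extensionality
  have key := der_ext (AlgHom.id (ZMod 2) _) (ιS.comp πS)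
    (LinearMap.id + (ιS.comp πS).toLinearMap) (dS.comp K + K.comp dS)
    (fun a b => by
      simp only [LinearMap.add_apply, LinearMap.id_apply, AlgHom.toLinearMap_apply,
        AlgHom.coe_comp, Function.comp_apply, AlgHom.coe_id, id_eq, map_mul]
      have h2 := add_self_zero (a * ιS (πS b))
      have hrw : (a + ιS (πS a)) * ιS (πS b) + a * (b + ιS (πS b))
          = (a * ιS (πS b) + a * ιS (πS b)) + (ιS (πS a) * ιS (πS b) + a * b) := by
        rw [add_mul, mul_add]; abel
      rw [hrw, h2, zero_add]
      exact add_comm _ _)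
    (fun a b => by
      simp only [LinearMap.add_apply, LinearMap.comp_apply, AlgHom.toLinearMap_apply,
        AlgHom.coe_comp, Function.comp_apply, AlgHom.coe_id, id_eq]
      rw [hKmul a b, hdS a b, map_add, hdS (K a) (ιS (πS b)), hdS a (K b),
        map_add, hKmul (dS a) b, hKmul a (dS b)]
      have e1 : dS (ιS (πS b)) = ιS (πS (dS b)) := (hιπd b).symm
      rw [e1]
      have h1 := add_self_zero (dS a * K b)
      have h2 := add_self_zero (K a * ιS (πS (dS b)))
      calc dS (K a) * ιS (πS b) + K a * ιS (πS (dS b)) + (dS a * K b + a * dS (K b))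
            + (K (dS a) * ιS (πS b) + dS a * K b + (K a * ιS (πS (dS b)) + a * K (dS b)))
          = (dS (K a) + K (dS a)) * ιS (πS b) + a * (dS (K b) + K (dS b))
            + (dS a * K b + dS a * K b) + (K a * ιS (πS (dS b)) + K a * ιS (πS (dS b))) := by
            rw [add_mul, mul_add]; abel
        _ = (dS (K a) + K (dS a)) * ιS (πS b) + a * (dS (K b) + K (dS b)) := by
            rw [h1, h2, add_zero, add_zero]
      )
    (fun z => by
      rcases z with x | (s | s)
      · simp only [LinearMap.add_apply, LinearMap.id_apply, AlgHom.toLinearMap_apply,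
          AlgHom.coe_comp, Function.comp_apply, LinearMap.comp_apply]
        rw [hπ_gen, hιS, hKgen, hgenS, hK0]
        simp [add_self_zero]
      · simp only [LinearMap.add_apply, LinearMap.id_apply, AlgHom.toLinearMap_apply,
          AlgHom.coe_comp, Function.comp_apply, LinearMap.comp_apply]
        rw [hπ_S, map_zero, add_zero, hKgen, hA, hKgen]
        simp
      · simp only [LinearMap.add_apply, LinearMap.id_apply, AlgHom.toLinearMap_apply,
          AlgHom.coe_comp, Function.comp_apply, LinearMap.comp_apply]
        rw [hπ_S, map_zero, add_zero, hKgen, hB, map_zero, add_zero]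
        simp only [Sum.elim_inr]
        rw [hA]
      )
  refine ⟨K, fun a b => by rw [hKmul], fun y => ?_⟩
  have := key y
  simp only [LinearMap.add_apply, LinearMap.id_apply, AlgHom.toLinearMap_apply,
    AlgHom.coe_comp, Function.comp_apply, LinearMap.comp_apply] at this
  exact this

end DGAAux


/-- An augmentation of the based DGA `(FreeAlgebra (ZMod 2) X, dX)`. -/
def IsAug {X : Type} (dX : FreeAlgebra (ZMod 2) X →ₗ[ZMod 2] FreeAlgebra (ZMod 2) X)
    (ε : FreeAlgebra (ZMod 2) X →ₐ[ZMod 2] ZMod 2) : Prop :=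
  ∀ a, ε (dX a) = 0

/-- The set of augmentations of `(FreeAlgebra (ZMod 2) X, dX)`. -/
def Aug {X : Type} (dX : FreeAlgebra (ZMod 2) X →ₗ[ZMod 2] FreeAlgebra (ZMod 2) X) : Type :=
  {ε : FreeAlgebra (ZMod 2) X →ₐ[ZMod 2] ZMod 2 // IsAug dX ε}

/-- DGA homotopy of augmentations: `ε + ε' = K ∘ ∂` for some `(ε,ε')`-derivation `K`. -/
def AugHtpy {X : Type} (dX : FreeAlgebra (ZMod 2) X →ₗ[ZMod 2] FreeAlgebra (ZMod 2) X)
    (e e' : Aug dX) : Prop :=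
  ∃ K : FreeAlgebra (ZMod 2) X →ₗ[ZMod 2] ZMod 2,
    (∀ a b, K (a * b) = K a * e'.1 b + e.1 a * K b) ∧
    (∀ a, e.1 a + e'.1 a = K (dX a))

/-- The set of homotopy classes of augmentations: the quotient of `Aug dX` by the
equivalence relation generated by DGA homotopy. -/
def AugCl {X : Type} (dX : FreeAlgebra (ZMod 2) X →ₗ[ZMod 2] FreeAlgebra (ZMod 2) X) : Type :=
  Quot (AugHtpy dX)

/-- The induced augmentation set of the immersed DGA map `(𝒜₁ →f ℬ ←i 𝒜₂)`:
the set of pairs `([ε∘i], [ε∘f])` for `ε` an augmentation of `ℬ`. -/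
def augSet {XB XA2 XA1 : Type}
    (dB : FreeAlgebra (ZMod 2) XB →ₗ[ZMod 2] FreeAlgebra (ZMod 2) XB)
    (dA2 : FreeAlgebra (ZMod 2) XA2 →ₗ[ZMod 2] FreeAlgebra (ZMod 2) XA2)
    (dA1 : FreeAlgebra (ZMod 2) XA1 →ₗ[ZMod 2] FreeAlgebra (ZMod 2) XA1)
    (i : FreeAlgebra (ZMod 2) XA2 →ₐ[ZMod 2] FreeAlgebra (ZMod 2) XB)
    (f : FreeAlgebra (ZMod 2) XA1 →ₐ[ZMod 2] FreeAlgebra (ZMod 2) XB) :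
    Set (AugCl dA2 × AugCl dA1) :=
  {q | ∃ (ε : Aug dB) (u : Aug dA2) (v : Aug dA1),
      (∀ a, u.1 a = ε.1 (i a)) ∧ (∀ a, v.1 a = ε.1 (f a)) ∧
      q = (Quot.mk _ u, Quot.mk _ v)}

/-- Immersed homotopic immersed DGA maps have the same induced
augmentation data: if `M = (𝒜₁ →f ℬ ←i 𝒜₂)` and `M' = (𝒜₁ →f' ℬ' ←i' 𝒜₂)` are immersed DGA
maps between triangular based DGAs over `ℤ/2` related by a stable tame isomorphism
`φ : ℬ*S → ℬ'*S'` with `φ∘ι∘i = ι'∘i'` and `φ∘ι∘f ≃ ι'∘f'`, then for the associated homotopy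
equivalence `h = π'∘φ∘ι : ℬ → ℬ'` one has `h∘i = i'`, `h∘f ≃ f'`, the induced map
`h* : Aug(ℬ')/≈ → Aug(ℬ)/≈`, `[α] ↦ [α∘h]`, is a well-defined bijection with
`[α∘i'] = [(α∘h)∘i]` and `[α∘f'] = [(α∘h)∘f]`, and the induced augmentation sets satisfy
`I(M) = I(M')`. -/
theorem induced_augmentation_set_invariance
    (n₁ n₂ nB nB' r r' : ℕ)
    (dA1 : FreeAlgebra (ZMod 2) (Fin n₁) →ₗ[ZMod 2] FreeAlgebra (ZMod 2) (Fin n₁))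
    (dA2 : FreeAlgebra (ZMod 2) (Fin n₂) →ₗ[ZMod 2] FreeAlgebra (ZMod 2) (Fin n₂))
    (dB : FreeAlgebra (ZMod 2) (Fin nB) →ₗ[ZMod 2] FreeAlgebra (ZMod 2) (Fin nB))
    (dB' : FreeAlgebra (ZMod 2) (Fin nB') →ₗ[ZMod 2] FreeAlgebra (ZMod 2) (Fin nB'))
    (hdA1_leib : ∀ a b, dA1 (a * b) = dA1 a * b + a * dA1 b)
    (hdA1_sq : ∀ a, dA1 (dA1 a) = 0)
    (hdA1_tri : ∀ k : Fin n₁, dA1 (FreeAlgebra.ι (ZMod 2) k) ∈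
      Algebra.adjoin (ZMod 2) (FreeAlgebra.ι (ZMod 2) '' {l : Fin n₁ | l < k}))
    (hdA2_leib : ∀ a b, dA2 (a * b) = dA2 a * b + a * dA2 b)
    (hdA2_sq : ∀ a, dA2 (dA2 a) = 0)
    (hdA2_tri : ∀ k : Fin n₂, dA2 (FreeAlgebra.ι (ZMod 2) k) ∈
      Algebra.adjoin (ZMod 2) (FreeAlgebra.ι (ZMod 2) '' {l : Fin n₂ | l < k}))
    (hdB_leib : ∀ a b, dB (a * b) = dB a * b + a * dB b)
    (hdB_sq : ∀ a, dB (dB a) = 0)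
    (hdB_tri : ∀ k : Fin nB, dB (FreeAlgebra.ι (ZMod 2) k) ∈
      Algebra.adjoin (ZMod 2) (FreeAlgebra.ι (ZMod 2) '' {l : Fin nB | l < k}))
    (hdB'_leib : ∀ a b, dB' (a * b) = dB' a * b + a * dB' b)
    (hdB'_sq : ∀ a, dB' (dB' a) = 0)
    (hdB'_tri : ∀ k : Fin nB', dB' (FreeAlgebra.ι (ZMod 2) k) ∈
      Algebra.adjoin (ZMod 2) (FreeAlgebra.ι (ZMod 2) '' {l : Fin nB' | l < k}))
    -- the immersed DGA map `M = (𝒜₁ →f ℬ ←i 𝒜₂)`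
    (f : FreeAlgebra (ZMod 2) (Fin n₁) →ₐ[ZMod 2] FreeAlgebra (ZMod 2) (Fin nB))
    (hf : ∀ a, dB (f a) = f (dA1 a))
    (i : FreeAlgebra (ZMod 2) (Fin n₂) →ₐ[ZMod 2] FreeAlgebra (ZMod 2) (Fin nB))
    (hi : ∀ a, dB (i a) = i (dA2 a))
    (σ : Fin n₂ → Fin nB) (hσ : Function.Injective σ)
    (hi_gen : ∀ x : Fin n₂, i (FreeAlgebra.ι (ZMod 2) x) = FreeAlgebra.ι (ZMod 2) (σ x))
    -- the immersed DGA map `M' = (𝒜₁ →f' ℬ' ←i' 𝒜₂)`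
    (f' : FreeAlgebra (ZMod 2) (Fin n₁) →ₐ[ZMod 2] FreeAlgebra (ZMod 2) (Fin nB'))
    (hf' : ∀ a, dB' (f' a) = f' (dA1 a))
    (i' : FreeAlgebra (ZMod 2) (Fin n₂) →ₐ[ZMod 2] FreeAlgebra (ZMod 2) (Fin nB'))
    (hi' : ∀ a, dB' (i' a) = i' (dA2 a))
    (σ' : Fin n₂ → Fin nB') (hσ' : Function.Injective σ')
    (hi'_gen : ∀ x : Fin n₂, i' (FreeAlgebra.ι (ZMod 2) x) = FreeAlgebra.ι (ZMod 2) (σ' x))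
    -- the stabilization `ℬ*S`
    (ιB : FreeAlgebra (ZMod 2) (Fin nB) →ₐ[ZMod 2]
      FreeAlgebra (ZMod 2) (Fin nB ⊕ (Fin r ⊕ Fin r)))
    (hιB : ∀ x : Fin nB, ιB (FreeAlgebra.ι (ZMod 2) x) = FreeAlgebra.ι (ZMod 2) (Sum.inl x))
    (dBS : FreeAlgebra (ZMod 2) (Fin nB ⊕ (Fin r ⊕ Fin r)) →ₗ[ZMod 2]
      FreeAlgebra (ZMod 2) (Fin nB ⊕ (Fin r ⊕ Fin r)))
    (hdBS_leib : ∀ a b, dBS (a * b) = dBS a * b + a * dBS b)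
    (hdBS_gen : ∀ x : Fin nB, dBS (FreeAlgebra.ι (ZMod 2) (Sum.inl x)) =
      ιB (dB (FreeAlgebra.ι (ZMod 2) x)))
    (hdBS_a : ∀ s : Fin r, dBS (FreeAlgebra.ι (ZMod 2) (Sum.inr (Sum.inl s))) =
      FreeAlgebra.ι (ZMod 2) (Sum.inr (Sum.inr s)))
    (hdBS_b : ∀ s : Fin r, dBS (FreeAlgebra.ι (ZMod 2) (Sum.inr (Sum.inr s))) = 0)
    -- the stabilization `ℬ'*S'`
    (ιB' : FreeAlgebra (ZMod 2) (Fin nB') →ₐ[ZMod 2]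
      FreeAlgebra (ZMod 2) (Fin nB' ⊕ (Fin r' ⊕ Fin r')))
    (hιB' : ∀ x : Fin nB', ιB' (FreeAlgebra.ι (ZMod 2) x) = FreeAlgebra.ι (ZMod 2) (Sum.inl x))
    (dBS' : FreeAlgebra (ZMod 2) (Fin nB' ⊕ (Fin r' ⊕ Fin r')) →ₗ[ZMod 2]
      FreeAlgebra (ZMod 2) (Fin nB' ⊕ (Fin r' ⊕ Fin r')))
    (hdBS'_leib : ∀ a b, dBS' (a * b) = dBS' a * b + a * dBS' b)
    (hdBS'_gen : ∀ x : Fin nB', dBS' (FreeAlgebra.ι (ZMod 2) (Sum.inl x)) =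
      ιB' (dB' (FreeAlgebra.ι (ZMod 2) x)))
    (hdBS'_a : ∀ s : Fin r', dBS' (FreeAlgebra.ι (ZMod 2) (Sum.inr (Sum.inl s))) =
      FreeAlgebra.ι (ZMod 2) (Sum.inr (Sum.inr s)))
    (hdBS'_b : ∀ s : Fin r', dBS' (FreeAlgebra.ι (ZMod 2) (Sum.inr (Sum.inr s))) = 0)
    (πB' : FreeAlgebra (ZMod 2) (Fin nB' ⊕ (Fin r' ⊕ Fin r')) →ₐ[ZMod 2]
      FreeAlgebra (ZMod 2) (Fin nB'))
    (hπB'_gen : ∀ x : Fin nB', πB' (FreeAlgebra.ι (ZMod 2) (Sum.inl x)) =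
      FreeAlgebra.ι (ZMod 2) x)
    (hπB'_S : ∀ s : Fin r' ⊕ Fin r', πB' (FreeAlgebra.ι (ZMod 2) (Sum.inr s)) = 0)
    -- the tame isomorphism `φ` relating the two stabilized DGAs
    (φ : FreeAlgebra (ZMod 2) (Fin nB ⊕ (Fin r ⊕ Fin r)) ≃ₐ[ZMod 2]
      FreeAlgebra (ZMod 2) (Fin nB' ⊕ (Fin r' ⊕ Fin r')))
    (hφ_d : ∀ y, dBS' (φ y) = φ (dBS y))
    (hφ_i : ∀ a, φ (ιB (i a)) = ιB' (i' a))
    (hφ_f : ∃ K : FreeAlgebra (ZMod 2) (Fin n₁) →ₗ[ZMod 2]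
        FreeAlgebra (ZMod 2) (Fin nB' ⊕ (Fin r' ⊕ Fin r')),
      (∀ a b, K (a * b) = K a * ιB' (f' b) + φ (ιB (f a)) * K b) ∧
      (∀ a, φ (ιB (f a)) + ιB' (f' a) = dBS' (K a) + K (dA1 a)))
    -- the associated homotopy equivalence `h = π'∘φ∘ι`
    (h : FreeAlgebra (ZMod 2) (Fin nB) →ₐ[ZMod 2] FreeAlgebra (ZMod 2) (Fin nB'))
    (hh : ∀ b, h b = πB' (φ (ιB b))) :
    (∀ a, h (i a) = i' a) ∧
    (∃ K' : FreeAlgebra (ZMod 2) (Fin n₁) →ₗ[ZMod 2] FreeAlgebra (ZMod 2) (Fin nB'),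
      (∀ a b, K' (a * b) = K' a * f' b + h (f a) * K' b) ∧
      (∀ a, h (f a) + f' a = dB' (K' a) + K' (dA1 a))) ∧
    (∀ ε : Aug dB', ∀ b, ε.1 (h (dB b)) = 0) ∧
    (∃ Hmap : AugCl dB' → AugCl dB,
      Function.Bijective Hmap ∧
      (∀ (ε : Aug dB') (ε'' : Aug dB), (∀ b, ε''.1 b = ε.1 (h b)) →
        Hmap (Quot.mk _ ε) = Quot.mk _ ε'')) ∧
    (∀ (ε : Aug dB') (u v : Aug dA2),
      (∀ a, u.1 a = ε.1 (i' a)) → (∀ a, v.1 a = ε.1 (h (i a))) →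
      Quot.mk (AugHtpy dA2) u = Quot.mk (AugHtpy dA2) v) ∧
    (∀ (ε : Aug dB') (u v : Aug dA1),
      (∀ a, u.1 a = ε.1 (f' a)) → (∀ a, v.1 a = ε.1 (h (f a))) →
      Quot.mk (AugHtpy dA1) u = Quot.mk (AugHtpy dA1) v) ∧
    augSet dB dA2 dA1 i f = augSet dB' dA2 dA1 i' f' := by

    -- ### Construction of the projection `πB : ℬ*S → ℬ`
  classical
  let πB : FreeAlgebra (ZMod 2) (Fin nB ⊕ (Fin r ⊕ Fin r)) →ₐ[ZMod 2]
      FreeAlgebra (ZMod 2) (Fin nB) :=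
    FreeAlgebra.lift (ZMod 2) (Sum.elim (FreeAlgebra.ι (ZMod 2)) (fun _ => 0))
  have hπB_gen : ∀ x : Fin nB, πB (FreeAlgebra.ι (ZMod 2) (Sum.inl x)) =
      FreeAlgebra.ι (ZMod 2) x := fun x => by
    simp [πB, FreeAlgebra.lift_ι_apply]
  have hπB_S : ∀ s : Fin r ⊕ Fin r, πB (FreeAlgebra.ι (ZMod 2) (Sum.inr s)) = 0 := fun s => by
    simp [πB, FreeAlgebra.lift_ι_apply]
  -- ### Basic compatibilities
  have hπBιB : ∀ b, πB (ιB b) = b := fun b => by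
    simpa using DGAAux.alg_ext (πB.comp ιB) (AlgHom.id (ZMod 2) _)
      (fun x => by simp [hιB, hπB_gen]) b
  have hπB'ιB' : ∀ b, πB' (ιB' b) = b := fun b => by
    simpa using DGAAux.alg_ext (πB'.comp ιB') (AlgHom.id (ZMod 2) _)
      (fun x => by simp [hιB', hπB'_gen]) b
  have hdιB : ∀ b, ιB (dB b) = dBS (ιB b) :=
    DGAAux.hom_d_comm dB dBS hdB_leib hdBS_leib ιB (fun x => by rw [hιB, hdBS_gen])
  have hdιB' : ∀ b, ιB' (dB' b) = dBS' (ιB' b) :=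
    DGAAux.hom_d_comm dB' dBS' hdB'_leib hdBS'_leib ιB' (fun x => by rw [hιB', hdBS'_gen])
  have hπBd : ∀ y, πB (dBS y) = dB (πB y) :=
    DGAAux.hom_d_comm dBS dB hdBS_leib hdB_leib πB (fun z => by
      rcases z with x | (s | s)
      · rw [hdBS_gen, hπBιB, hπB_gen]
      · rw [hdBS_a, hπB_S, hπB_S, map_zero]
      · rw [hdBS_b, hπB_S, map_zero, map_zero])
  have hπB'd : ∀ y, πB' (dBS' y) = dB' (πB' y) :=
    DGAAux.hom_d_comm dBS' dB' hdBS'_leib hdB'_leib πB' (fun z => by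
      rcases z with x | (s | s)
      · rw [hdBS'_gen, hπB'ιB', hπB'_gen]
      · rw [hdBS'_a, hπB'_S, hπB'_S, map_zero]
      · rw [hdBS'_b, hπB'_S, map_zero, map_zero])
  have hφd : ∀ y, φ (dBS y) = dBS' (φ y) := fun y => (hφ_d y).symm
  have hφsymmd : ∀ z, φ.symm (dBS' z) = dBS (φ.symm z) := fun z =>
    φ.injective (by rw [AlgEquiv.apply_symm_apply, hφd, AlgEquiv.apply_symm_apply])
  -- ### The reverse homotopy equivalence `h' = π ∘ φ⁻¹ ∘ ι'`
  let h' : FreeAlgebra (ZMod 2) (Fin nB') →ₐ[ZMod 2] FreeAlgebra (ZMod 2) (Fin nB) :=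
    πB.comp ((φ.symm : FreeAlgebra (ZMod 2) (Fin nB' ⊕ (Fin r' ⊕ Fin r')) ≃ₐ[ZMod 2]
      FreeAlgebra (ZMod 2) (Fin nB ⊕ (Fin r ⊕ Fin r))).toAlgHom.comp ιB')
  have hh' : ∀ b, h' b = πB (φ.symm (ιB' b)) := fun b => rfl
  have hhd : ∀ b, h (dB b) = dB' (h b) := fun b => by
    rw [hh, hh, hdιB, hφd, hπB'd]
  have hh'd : ∀ b, h' (dB' b) = dB (h' b) := fun b => by
    rw [hh', hh', hdιB', hφsymmd, hπBd]
  have hhi : ∀ a, h (i a) = i' a := fun a => by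
    rw [hh, hφ_i, hπB'ιB']
  have hh'i' : ∀ a, h' (i' a) = i a := fun a => by
    rw [hh']
    have : φ.symm (ιB' (i' a)) = ιB (i a) := by
      apply φ.injective; rw [AlgEquiv.apply_symm_apply, hφ_i]
    rw [this, hπBιB]
  -- ### Conjunct 2: `h∘f ≃ f'`
  obtain ⟨K, hK1, hK2⟩ := hφ_f
  let K' : FreeAlgebra (ZMod 2) (Fin n₁) →ₗ[ZMod 2] FreeAlgebra (ZMod 2) (Fin nB') :=
    πB'.toLinearMap.comp K
  have main2a : ∀ a b, K' (a * b) = K' a * f' b + h (f a) * K' b := fun a b => by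
    simp only [K', LinearMap.comp_apply, AlgHom.toLinearMap_apply]
    rw [hK1, map_add, map_mul, map_mul, hπB'ιB', hh]
  have main2b : ∀ a, h (f a) + f' a = dB' (K' a) + K' (dA1 a) := fun a => by
    calc h (f a) + f' a = πB' (φ (ιB (f a))) + πB' (ιB' (f' a)) := by rw [hh, hπB'ιB']
      _ = πB' (φ (ιB (f a)) + ιB' (f' a)) := (map_add πB' _ _).symm
      _ = πB' (dBS' (K a) + K (dA1 a)) := by rw [hK2]
      _ = dB' (πB' (K a)) + πB' (K (dA1 a)) := by rw [map_add, hπB'd]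
      _ = dB' (K' a) + K' (dA1 a) := rfl
  -- ### Stabilization homotopies and the homotopy inverses
  have hstabB : DGAAux.Htpy dBS dBS (fun y => y) (fun y => ιB (πB y)) :=
    DGAAux.stab_htpy dB hdB_leib ιB hιB dBS hdBS_leib hdBS_gen hdBS_a hdBS_b πB hπB_gen hπB_S
  have hstabB' : DGAAux.Htpy dBS' dBS' (fun y => y) (fun y => ιB' (πB' y)) :=
    DGAAux.stab_htpy dB' hdB'_leib ιB' hιB' dBS' hdBS'_leib hdBS'_gen hdBS'_a hdBS'_b
      πB' hπB'_gen hπB'_S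
  -- `id ≃ h' ∘ h` on ℬ
  have hh'h : DGAAux.Htpy dB dB (fun b => b) (fun b => h' (h b)) := by
    have t1 := hstabB'.compLeft (φ.symm :
        FreeAlgebra (ZMod 2) (Fin nB' ⊕ (Fin r' ⊕ Fin r')) ≃ₐ[ZMod 2]
        FreeAlgebra (ZMod 2) (Fin nB ⊕ (Fin r ⊕ Fin r))).toAlgHom hφsymmd
    have t2 := t1.compRight (φ : FreeAlgebra (ZMod 2) (Fin nB ⊕ (Fin r ⊕ Fin r)) ≃ₐ[ZMod 2]
        FreeAlgebra (ZMod 2) (Fin nB' ⊕ (Fin r' ⊕ Fin r'))).toAlgHom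
      (fun a => (hφd a).symm)
    have t3 := t2.compLeft πB hπBd
    have t4 := t3.compRight ιB (fun a => (hdιB a).symm)
    refine t4.congr (fun b => ?_) (fun b => ?_)
    · show πB (φ.symm (φ (ιB b))) = b
      rw [AlgEquiv.symm_apply_apply]
      exact hπBιB b
    · show πB (φ.symm (ιB' (πB' (φ (ιB b))))) = h' (h b)
      rw [hh', hh]
  -- `id ≃ h ∘ h'` on ℬ'
  have hhh' : DGAAux.Htpy dB' dB' (fun b => b) (fun b => h (h' b)) := by
    have t1 := hstabB.compLeft (φ : FreeAlgebra (ZMod 2) (Fin nB ⊕ (Fin r ⊕ Fin r)) ≃ₐ[ZMod 2]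
        FreeAlgebra (ZMod 2) (Fin nB' ⊕ (Fin r' ⊕ Fin r'))).toAlgHom hφd
    have t2 := t1.compRight (φ.symm :
        FreeAlgebra (ZMod 2) (Fin nB' ⊕ (Fin r' ⊕ Fin r')) ≃ₐ[ZMod 2]
        FreeAlgebra (ZMod 2) (Fin nB ⊕ (Fin r ⊕ Fin r))).toAlgHom
      (fun a => (hφsymmd a).symm)
    have t3 := t2.compLeft πB' hπB'd
    have t4 := t3.compRight ιB' (fun a => (hdιB' a).symm)
    refine t4.congr (fun b => ?_) (fun b => ?_)
    · show πB' (φ (φ.symm (ιB' b))) = b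
      rw [AlgEquiv.apply_symm_apply]
      exact hπB'ιB' b
    · show πB' (φ (ιB (πB (φ.symm (ιB' b))))) = h (h' b)
      rw [hh, hh']
  -- ### Pullback of augmentations
  have hpull : ∀ ε : Aug dB', IsAug dB (ε.1.comp h) := fun ε a => by
    simp only [AlgHom.coe_comp, Function.comp_apply]
    rw [hhd]; exact ε.2 (h a)
  have hpull' : ∀ ε : Aug dB, IsAug dB' (ε.1.comp h') := fun ε a => by
    simp only [AlgHom.coe_comp, Function.comp_apply]
    rw [hh'd]; exact ε.2 (h' a)
  let pull : Aug dB' → Aug dB := fun ε => ⟨ε.1.comp h, hpull ε⟩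
  let pull' : Aug dB → Aug dB' := fun ε => ⟨ε.1.comp h', hpull' ε⟩
  have hres : ∀ e e' : Aug dB', AugHtpy dB' e e' → AugHtpy dB (pull e) (pull e') := by
    rintro e e' ⟨L, hL1, hL2⟩
    refine ⟨L.comp h.toLinearMap, fun a b => ?_, fun a => ?_⟩
    · simp only [LinearMap.comp_apply, AlgHom.toLinearMap_apply, map_mul]
      rw [hL1]; rfl
    · simp only [LinearMap.comp_apply, AlgHom.toLinearMap_apply]
      show e.1 (h a) + e'.1 (h a) = L (h (dB a))
      rw [hhd]; exact hL2 (h a)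
  have hres' : ∀ e e' : Aug dB, AugHtpy dB e e' → AugHtpy dB' (pull' e) (pull' e') := by
    rintro e e' ⟨L, hL1, hL2⟩
    refine ⟨L.comp h'.toLinearMap, fun a b => ?_, fun a => ?_⟩
    · simp only [LinearMap.comp_apply, AlgHom.toLinearMap_apply, map_mul]
      rw [hL1]; rfl
    · simp only [LinearMap.comp_apply, AlgHom.toLinearMap_apply]
      show e.1 (h' a) + e'.1 (h' a) = L (h' (dB' a))
      rw [hh'd]; exact hL2 (h' a)
  let Hmap : AugCl dB' → AugCl dB :=
    Quot.lift (fun ε => Quot.mk _ (pull ε)) (fun e e' hr => Quot.sound (hres e e' hr))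
  let Gmap : AugCl dB → AugCl dB' :=
    Quot.lift (fun ε => Quot.mk _ (pull' ε)) (fun e e' hr => Quot.sound (hres' e e' hr))
  -- `Gmap ∘ Hmap = id`
  obtain ⟨Kc, hKc1, hKc2⟩ := hhh'
  obtain ⟨Kd, hKd1, hKd2⟩ := hh'h
  have hGH : ∀ q, Gmap (Hmap q) = q := by
    apply Quot.ind; intro ε
    have key : AugHtpy dB' ε (pull' (pull ε)) := by
      refine ⟨ε.1.toLinearMap.comp Kc, fun a b => ?_, fun a => ?_⟩
      · simp only [LinearMap.comp_apply, AlgHom.toLinearMap_apply]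
        rw [hKc1, map_add, map_mul, map_mul]; rfl
      · simp only [LinearMap.comp_apply, AlgHom.toLinearMap_apply]
        show ε.1 a + ε.1 (h (h' a)) = ε.1 (Kc (dB' a))
        rw [← map_add, hKc2 a, map_add, ε.2 (Kc a), zero_add]
    have u1 : Hmap (Quot.mk (AugHtpy dB') ε) = Quot.mk (AugHtpy dB) (pull ε) := rfl
    have u2 : Gmap (Quot.mk (AugHtpy dB) (pull ε)) = Quot.mk (AugHtpy dB') (pull' (pull ε)) := rfl
    rw [u1, u2]
    exact (Quot.sound key).symm
  have hHG : ∀ q, Hmap (Gmap q) = q := by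
    apply Quot.ind; intro ε
    have key : AugHtpy dB ε (pull (pull' ε)) := by
      refine ⟨ε.1.toLinearMap.comp Kd, fun a b => ?_, fun a => ?_⟩
      · simp only [LinearMap.comp_apply, AlgHom.toLinearMap_apply]
        rw [hKd1, map_add, map_mul, map_mul]; rfl
      · simp only [LinearMap.comp_apply, AlgHom.toLinearMap_apply]
        show ε.1 a + ε.1 (h' (h a)) = ε.1 (Kd (dB a))
        rw [← map_add, hKd2 a, map_add, ε.2 (Kd a), zero_add]
    have u1 : Gmap (Quot.mk (AugHtpy dB) ε) = Quot.mk (AugHtpy dB') (pull' ε) := rfl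
    have u2 : Hmap (Quot.mk (AugHtpy dB') (pull' ε)) = Quot.mk (AugHtpy dB) (pull (pull' ε)) := rfl
    rw [u1, u2]
    exact (Quot.sound key).symm
  -- ### Conjunct 6 (reused below)
  have main6 : ∀ (ε : Aug dB') (u v : Aug dA1),
      (∀ a, u.1 a = ε.1 (f' a)) → (∀ a, v.1 a = ε.1 (h (f a))) →
      Quot.mk (AugHtpy dA1) u = Quot.mk (AugHtpy dA1) v := by
    intro ε u v hu hv
    refine (Quot.sound (⟨ε.1.toLinearMap.comp K', fun a b => ?_, fun a => ?_⟩ :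
      AugHtpy dA1 v u)).symm
    · simp only [LinearMap.comp_apply, AlgHom.toLinearMap_apply]
      rw [main2a a b, map_add, map_mul, map_mul, hu b, hv a]
    · simp only [LinearMap.comp_apply, AlgHom.toLinearMap_apply]
      rw [hv a, hu a, ← map_add, main2b a, map_add, ε.2 (K' a), zero_add]
  -- ### Assemble the conclusion
  refine ⟨hhi, ⟨K', main2a, main2b⟩, ?_, ?_, ?_, main6, ?_⟩
  · -- conjunct 3
    intro ε b
    rw [hhd]; exact ε.2 (h b)
  · -- conjunct 4
    refine ⟨Hmap, ⟨Function.LeftInverse.injective hGH, fun q => ⟨Gmap q, hHG q⟩⟩, ?_⟩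
    intro ε ε'' hb
    have hεε : ε'' = pull ε := Subtype.ext (AlgHom.ext fun b => by
      rw [hb b]; rfl)
    rw [hεε]
  · -- conjunct 5
    intro ε u v hu hv
    have huv : u = v := Subtype.ext (AlgHom.ext fun a => by rw [hu a, hv a, hhi a])
    rw [huv]
  · -- conjunct 7: equality of induced augmentation sets
    apply Set.Subset.antisymm
    · rintro q ⟨ε, u, v, hu, hv, hq⟩
      subst hq
      -- transport along `h'`
      have hv'aug : IsAug dA1 ((pull' ε).1.comp f') := fun a => by
        simp only [AlgHom.coe_comp, Function.comp_apply]
        rw [← hf' a]; exact (pull' ε).2 (f' a)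
      have hw₁aug : IsAug dA1 (((pull' ε).1.comp h).comp f) := fun a => by
        simp only [AlgHom.coe_comp, Function.comp_apply]
        rw [← hf a, hhd (f a)]
        exact (pull' ε).2 (h (f a))
      refine ⟨pull' ε, u, ⟨(pull' ε).1.comp f', hv'aug⟩, fun a => ?_, fun a => rfl, ?_⟩
      · rw [hu a]
        show ε.1 (i a) = ε.1 (h' (i' a))
        rw [hh'i']
      · refine (Prod.mk.injEq _ _ _ _).mpr ?_
        refine ⟨rfl, ?_⟩
        -- `[ε∘f] = [ε∘h'∘f']`
        have step1 : Quot.mk (AugHtpy dA1) (⟨(pull' ε).1.comp f', hv'aug⟩ : Aug dA1)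
            = Quot.mk (AugHtpy dA1) (⟨((pull' ε).1.comp h).comp f, hw₁aug⟩ : Aug dA1) :=
          main6 (pull' ε) _ _ (fun a => rfl) (fun a => rfl)
        have step2 : AugHtpy dA1 v (⟨((pull' ε).1.comp h).comp f, hw₁aug⟩ : Aug dA1) := by
          refine ⟨ε.1.toLinearMap.comp (Kd.comp f.toLinearMap), fun a b => ?_, fun a => ?_⟩
          · simp only [LinearMap.comp_apply, AlgHom.toLinearMap_apply, map_mul]
            rw [hKd1, map_add, map_mul, map_mul, hv a]
            rfl
          · simp only [LinearMap.comp_apply, AlgHom.toLinearMap_apply]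
            rw [hv a]
            show ε.1 (f a) + ε.1 (h' (h (f a))) = ε.1 (Kd (f (dA1 a)))
            rw [← hf a, ← map_add, hKd2 (f a), map_add, ε.2 (Kd (f a)), zero_add]
        exact (Quot.sound step2).trans step1.symm
    · rintro q ⟨ε, u, v, hu, hv, hq⟩
      subst hq
      -- transport along `h`
      have hvBaug : IsAug dA1 ((pull ε).1.comp f) := fun a => by
        simp only [AlgHom.coe_comp, Function.comp_apply]
        rw [← hf a]; exact (pull ε).2 (f a)
      refine ⟨pull ε, u, ⟨(pull ε).1.comp f, hvBaug⟩, fun a => ?_, fun a => rfl, ?_⟩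
      · rw [hu a]
        show ε.1 (i' a) = ε.1 (h (i a))
        rw [hhi]
      · refine (Prod.mk.injEq _ _ _ _).mpr ?_
        refine ⟨rfl, ?_⟩
        exact main6 ε v _ (fun a => hv a) (fun a => rfl)


end
end
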